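/- arXiv:1711.09014 — 3 statements merged into one kernel-verified Lean document; each statement's English description precedes it below -/
import Mathlib

section
/- Let n ≥ 3 and 1 ≤ k ≤ n−1 be integers, and let G be a simple connected graph on n vertices with vertex connectivity κ(G) ≤ k. Then Π1(G) ≤ k^2 · (n−1)^{2k} · (n−2)^{2(n−k−1)}, with equality if and only if G is isomorphic to K_n^k. -/
/-!
A vertex cut `S` with `s ≤ k` vertices splits the other vertices into two nonempty sides `A`
and `B` with no edges between them, so `G` is a subgraph of the complete graph with all `A`–`B`
edges removed. Vertex degrees are therefore capped by `|A| + s - 1` on `A`, `|B| + s - 1` on `B`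
and `n - 1` on `S`. By Bernoulli's inequality the product of these caps grows when all but one
vertex of `A ∪ B` move to the same side, and it grows when a vertex moves from `B` into `S`;
in the extreme case `|A| = 1`, `s = k` it is exactly the degree product of `K_n^k`. In the
equality case every degree meets its cap, so `G` is that extremal graph.
-/

open SimpleGraph Finset

/-- Degree of a vertex (as `Nat.card` of its neighbor set). -/
noncomputable def mdeg {V : Type*} (G : SimpleGraph V) (v : V) : ℕ :=
  Nat.card (G.neighborSet v)

/-- First multiplicative Zagreb index. -/
noncomputable def mZ1 {V : Type*} [Fintype V] (G : SimpleGraph V) : ℕ :=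
  ∏ v : V, (mdeg G v) ^ 2

/-- Second multiplicative Zagreb index. -/
noncomputable def mZ2 {V : Type*} [Fintype V] (G : SimpleGraph V) : ℕ :=
  ∏ v : V, (mdeg G v) ^ (mdeg G v)

/-- `S` is a vertex cut of `G`: deleting `S` leaves a nonempty disconnected graph. -/
def IsVertexCut {V : Type*} (G : SimpleGraph V) (S : Finset V) : Prop :=
  ((↑S : Set V)ᶜ).Nonempty ∧ ¬ (G.induce ((↑S : Set V)ᶜ)).Connected

/-- The vertex connectivity of `G` is at most `k`: either `G` has a vertex cut of
size at most `k`, or `G` is complete with `n - 1 ≤ k` vertices. -/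
def VertexConnAtMost {V : Type*} [Fintype V] (G : SimpleGraph V) (k : ℕ) : Prop :=
  (∃ S : Finset V, S.card ≤ k ∧ IsVertexCut G S) ∨ (G = ⊤ ∧ Fintype.card V - 1 ≤ k)

/-- The graph `K_n^k`: vertex `0` is joined to the first `k` vertices of the complete
graph on the remaining `n - 1` vertices. -/
def KnK (n k : ℕ) : SimpleGraph (Fin n) :=
  SimpleGraph.fromRel (fun u v => (u.val ≠ 0 ∧ v.val ≠ 0) ∨ (u.val = 0 ∧ 1 ≤ v.val ∧ v.val ≤ k))


lemma card_filter_mem_and_mem {V : Type*} [Fintype V] [DecidableEq V] {A B : Finset V}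
    (hAB : Disjoint A B) :
    #{x | x ∈ A ∧ x ∉ B} = #A ∧ #{x | x ∉ A ∧ x ∈ B} = #B ∧
      #{x | x ∉ A ∧ x ∉ B} = Fintype.card V - #A - #B ∧ #{x | x ∈ A ∧ x ∈ B} = 0 := by
  have hA : ({x | x ∈ A ∧ x ∉ B} : Finset V) = A := by
    ext x; simpa using fun hx => Finset.disjoint_left.1 hAB hx
  have hB : ({x | x ∉ A ∧ x ∈ B} : Finset V) = B := by
    ext x; simpa using fun hx => Finset.disjoint_right.1 hAB hx
  have hC : ({x | x ∉ A ∧ x ∉ B} : Finset V) = (A ∪ B)ᶜ := by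
    ext x; simp
  refine ⟨by rw [hA], by rw [hB],
    by rw [hC, card_compl, card_union_of_disjoint hAB, Nat.sub_add_eq], ?_⟩
  simpa using fun x hx => Finset.disjoint_left.1 hAB hx

lemma exists_equiv_mem_iff_mem {V W : Type*} [Fintype V] [Fintype W] [DecidableEq V]
    [DecidableEq W] {A B : Finset V} {A' B' : Finset W} (hAB : Disjoint A B)
    (hAB' : Disjoint A' B') (hcard : Fintype.card V = Fintype.card W) (hA : #A = #A')
    (hB : #B = #B') :
    ∃ e : V ≃ W, ∀ x, (e x ∈ A' ↔ x ∈ A) ∧ (e x ∈ B' ↔ x ∈ B) := by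
  let f : V → Bool × Bool := fun x => (x ∈ A, x ∈ B)
  let g : W → Bool × Bool := fun y => (y ∈ A', y ∈ B')
  have hfiber : ∀ c, Fintype.card {x // f x = c} = Fintype.card {y // g y = c} := by
    obtain ⟨h₁, h₂, h₃, h₄⟩ := card_filter_mem_and_mem hAB
    obtain ⟨h₁', h₂', h₃', h₄'⟩ := card_filter_mem_and_mem hAB'
    rintro ⟨_ | _, _ | _⟩ <;>
      simp only [Fintype.card_subtype, f, g, Prod.mk.injEq, decide_eq_true_eq,
        decide_eq_false_iff_not] <;> omega
  refine ⟨Equiv.ofFiberEquiv fun c => Fintype.equivOfCardEq (hfiber c), fun x => ?_⟩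
  simpa [f, g] using Equiv.ofFiberEquiv_map (fun c => Fintype.equivOfCardEq (hfiber c)) x

lemma mul_pow_succ_le_mul_add_pow_succ (a b s : ℕ) :
    (a + s + 1) * (b + s + 1) ^ (b + 1) ≤ (s + 1) * (a + b + s + 1) ^ (b + 1) := by
  set y := b + s + 1
  have bernoulli : y ^ (b + 1) + (b + 1) * y ^ b * a ≤ (y + a) ^ (b + 1) := by
    simpa using pow_add_mul_le_add_pow (Nat.zero_le y) (Nat.zero_le (2 * y + a)) (b + 1)
  have hy : a * y ≤ (s + 1) * ((b + 1) * a) := by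
    have : y ≤ (s + 1) * (b + 1) := by simp only [y]; nlinarith
    nlinarith
  calc (a + s + 1) * y ^ (b + 1) = (s + 1) * y ^ (b + 1) + a * y * y ^ b := by ring
    _ ≤ (s + 1) * y ^ (b + 1) + (s + 1) * ((b + 1) * a) * y ^ b := by gcongr
    _ = (s + 1) * (y ^ (b + 1) + (b + 1) * y ^ b * a) := by ring
    _ ≤ (s + 1) * (y + a) ^ (b + 1) := by gcongr
    _ = (s + 1) * (a + b + s + 1) ^ (b + 1) := by rw [show y + a = a + b + s + 1 by omega]

lemma pow_mul_pow_le_mul_pow (a b s : ℕ) :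
    (a + s + 1) ^ (a + 1) * (b + s + 1) ^ (b + 1) ≤ (s + 1) * (a + b + s + 1) ^ (a + b + 1) :=
  calc (a + s + 1) ^ (a + 1) * (b + s + 1) ^ (b + 1)
      = (a + s + 1) ^ a * ((a + s + 1) * (b + s + 1) ^ (b + 1)) := by ring
    _ ≤ (a + b + s + 1) ^ a * ((s + 1) * (a + b + s + 1) ^ (b + 1)) :=
      Nat.mul_le_mul (Nat.pow_le_pow_left (by omega) a) (mul_pow_succ_le_mul_add_pow_succ a b s)
    _ = (s + 1) * (a + b + s + 1) ^ (a + b + 1) := by ring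

lemma pow_mul_pow_lt_mul_pow {a b : ℕ} (s : ℕ) (ha : 0 < a) (hb : 0 < b) :
    (a + s + 1) ^ (a + 1) * (b + s + 1) ^ (b + 1) < (s + 1) * (a + b + s + 1) ^ (a + b + 1) :=
  calc (a + s + 1) ^ (a + 1) * (b + s + 1) ^ (b + 1)
      = (a + s + 1) ^ a * ((a + s + 1) * (b + s + 1) ^ (b + 1)) := by ring
    _ < (a + b + s + 1) ^ a * ((s + 1) * (a + b + s + 1) ^ (b + 1)) :=
      Nat.mul_lt_mul_of_lt_of_le (Nat.pow_lt_pow_left (by omega) ha.ne')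
        (mul_pow_succ_le_mul_add_pow_succ a b s) (by positivity)
    _ = (s + 1) * (a + b + s + 1) ^ (a + b + 1) := by ring

lemma mul_pow_mul_pow_le_mul_pow_mul_pow (s j r m : ℕ) :
    s * (m + 1) ^ s * m ^ (j + r) ≤ (s + j) * (m + 1) ^ (s + j) * m ^ r :=
  calc s * (m + 1) ^ s * m ^ (j + r) = s * m ^ j * ((m + 1) ^ s * m ^ r) := by ring
    _ ≤ (s + j) * (m + 1) ^ j * ((m + 1) ^ s * m ^ r) := by gcongr <;> omega
    _ = (s + j) * (m + 1) ^ (s + j) * m ^ r := by ring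

lemma mul_pow_mul_pow_lt_mul_pow_mul_pow (s r : ℕ) {j m : ℕ} (hj : 0 < j) (hm : 0 < m) :
    s * (m + 1) ^ s * m ^ (j + r) < (s + j) * (m + 1) ^ (s + j) * m ^ r := by
  have : s * m ^ j < (s + j) * (m + 1) ^ j :=
    calc s * m ^ j ≤ s * (m + 1) ^ j := by gcongr; omega
      _ < (s + j) * (m + 1) ^ j := by gcongr; omega
  calc s * (m + 1) ^ s * m ^ (j + r) = s * m ^ j * ((m + 1) ^ s * m ^ r) := by ring
    _ < (s + j) * (m + 1) ^ j * ((m + 1) ^ s * m ^ r) := by gcongr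
    _ = (s + j) * (m + 1) ^ (s + j) * m ^ r := by ring

lemma sep_bound_le_and_lt {n a b k : ℕ} (ha : 1 ≤ a) (hb : 1 ≤ b) (hab : a + b < n)
    (hk : n - a - b ≤ k) (hkn : k ≤ n - 1) :
    (n - b - 1) ^ a * (n - 1) ^ (n - a - b) * (n - a - 1) ^ b
        ≤ k * (n - 1) ^ k * (n - 2) ^ (n - k - 1) ∧
      ((2 ≤ a ∧ 2 ≤ b) ∨ n - a - b < k →
        (n - b - 1) ^ a * (n - 1) ^ (n - a - b) * (n - a - 1) ^ b
          < k * (n - 1) ^ k * (n - 2) ^ (n - k - 1)) := by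
  obtain ⟨a, rfl⟩ : ∃ a', a = a' + 1 := ⟨a - 1, by omega⟩
  obtain ⟨b, rfl⟩ : ∃ b', b = b' + 1 := ⟨b - 1, by omega⟩
  obtain ⟨s, rfl⟩ : ∃ s, n = a + b + s + 3 := ⟨n - a - b - 3, by omega⟩
  obtain ⟨j, rfl⟩ : ∃ j, k = s + 1 + j := ⟨k - s - 1, by omega⟩
  obtain ⟨r, hr⟩ : ∃ r, a + b + 1 = j + r := ⟨a + b + 1 - j, by omega⟩
  set m := a + b + s + 1 with hm
  rw [show a + b + s + 3 - (b + 1) - 1 = a + s + 1 by omega,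
    show a + b + s + 3 - (a + 1) - (b + 1) = s + 1 by omega,
    show a + b + s + 3 - (a + 1) - 1 = b + s + 1 by omega,
    show a + b + s + 3 - (s + 1 + j) - 1 = r by omega,
    show a + b + s + 3 - 1 = m + 1 by omega, show a + b + s + 3 - 2 = m by omega]
  have hcaps : (a + s + 1) ^ (a + 1) * (m + 1) ^ (s + 1) * (b + s + 1) ^ (b + 1)
      = (a + s + 1) ^ (a + 1) * (b + s + 1) ^ (b + 1) * (m + 1) ^ (s + 1) := by ring
  have hmid : (s + 1) * m ^ (a + b + 1) * (m + 1) ^ (s + 1)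
      = (s + 1) * (m + 1) ^ (s + 1) * m ^ (j + r) := by rw [hr]; ring
  rw [hcaps]
  refine ⟨?_, fun hstrict => ?_⟩
  · calc (a + s + 1) ^ (a + 1) * (b + s + 1) ^ (b + 1) * (m + 1) ^ (s + 1)
        ≤ (s + 1) * m ^ (a + b + 1) * (m + 1) ^ (s + 1) :=
          Nat.mul_le_mul_right _ (pow_mul_pow_le_mul_pow a b s)
      _ = (s + 1) * (m + 1) ^ (s + 1) * m ^ (j + r) := hmid
      _ ≤ (s + 1 + j) * (m + 1) ^ (s + 1 + j) * m ^ r :=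
          mul_pow_mul_pow_le_mul_pow_mul_pow _ _ _ _
  · rcases hstrict with ⟨ha₂, hb₂⟩ | hsk
    · calc (a + s + 1) ^ (a + 1) * (b + s + 1) ^ (b + 1) * (m + 1) ^ (s + 1)
          < (s + 1) * m ^ (a + b + 1) * (m + 1) ^ (s + 1) :=
            Nat.mul_lt_mul_of_pos_right (pow_mul_pow_lt_mul_pow s (by omega) (by omega))
              (by positivity)
        _ = (s + 1) * (m + 1) ^ (s + 1) * m ^ (j + r) := hmid
        _ ≤ (s + 1 + j) * (m + 1) ^ (s + 1 + j) * m ^ r :=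
            mul_pow_mul_pow_le_mul_pow_mul_pow _ _ _ _
    · calc (a + s + 1) ^ (a + 1) * (b + s + 1) ^ (b + 1) * (m + 1) ^ (s + 1)
          ≤ (s + 1) * m ^ (a + b + 1) * (m + 1) ^ (s + 1) :=
            Nat.mul_le_mul_right _ (pow_mul_pow_le_mul_pow a b s)
        _ = (s + 1) * (m + 1) ^ (s + 1) * m ^ (j + r) := hmid
        _ < (s + 1 + j) * (m + 1) ^ (s + 1 + j) * m ^ r :=
            mul_pow_mul_pow_lt_mul_pow_mul_pow _ _ (by omega) (by omega)

namespace SimpleGraph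

variable {V W : Type*}

/-- The largest graph in which no vertex of `A` is adjacent to a vertex of `B`. -/
def sepGraph (A B : Set V) : SimpleGraph V :=
  (fromRel fun x y => x ∈ A ∧ y ∈ B)ᶜ

lemma sepGraph_adj {A B : Set V} {x y : V} :
    (sepGraph A B).Adj x y ↔ x ≠ y ∧ ¬(x ∈ A ∧ y ∈ B) ∧ ¬(x ∈ B ∧ y ∈ A) := by
  simp only [sepGraph, compl_adj, fromRel_adj]
  tauto

lemma sepGraph_comm (A B : Set V) : sepGraph A B = sepGraph B A := by
  ext x y
  simp only [sepGraph_adj]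
  tauto

lemma le_sepGraph_iff {G : SimpleGraph V} {A B : Set V} :
    G ≤ sepGraph A B ↔ ∀ x ∈ A, ∀ y ∈ B, ¬G.Adj x y := by
  refine ⟨fun h x hx y hy hxy => (sepGraph_adj.1 (h hxy)).2.1 ⟨hx, hy⟩, fun h x y hxy => ?_⟩
  exact sepGraph_adj.2
    ⟨hxy.ne, fun ⟨hx, hy⟩ => h x hx y hy hxy, fun ⟨hx, hy⟩ => h y hy x hx hxy.symm⟩

def Iso.sepGraph {A B : Set V} {A' B' : Set W} (e : V ≃ W) (hA : ∀ x, e x ∈ A' ↔ x ∈ A)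
    (hB : ∀ x, e x ∈ B' ↔ x ∈ B) : sepGraph A B ≃g sepGraph A' B' :=
  ⟨e, by simp [sepGraph_adj, hA, hB]⟩

lemma mdeg_le_of_le [Finite V] {G H : SimpleGraph V} (h : G ≤ H) (v : V) :
    mdeg G v ≤ mdeg H v :=
  Nat.card_mono (Set.toFinite _) fun _ hw => h hw

lemma eq_of_le_of_mdeg_eq [Finite V] {G H : SimpleGraph V} (h : G ≤ H)
    (hdeg : ∀ v, mdeg G v = mdeg H v) : G = H := by
  refine le_antisymm h fun v w hvw => ?_
  have : G.neighborSet v = H.neighborSet v :=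
    Set.eq_of_subset_of_ncard_le (fun _ hu => h hu)
      (by simpa only [mdeg, Nat.card_coe_set_eq] using (hdeg v).ge) (Set.toFinite _)
  exact (this ▸ hvw : w ∈ G.neighborSet v)

lemma eq_of_le_of_prod_mdeg_eq [Fintype V] {G H : SimpleGraph V} (h : G ≤ H)
    (hpos : ∀ v, 0 < mdeg G v) (hprod : ∏ v, mdeg G v = ∏ v, mdeg H v) : G = H := by
  refine eq_of_le_of_mdeg_eq h fun v => ?_
  by_contra hne
  refine hprod.not_lt (prod_lt_prod (fun v _ => hpos v) (fun v _ => mdeg_le_of_le h v) ?_)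
  exact ⟨v, mem_univ v, (mdeg_le_of_le h v).lt_of_ne hne⟩

lemma Connected.mdeg_pos [Finite V] [Nontrivial V] {G : SimpleGraph V} (hG : G.Connected)
    (v : V) : 0 < mdeg G v := by
  obtain ⟨w, hw⟩ := hG.preconnected.exists_adj_of_nontrivial v
  have : Nonempty (G.neighborSet v) := ⟨⟨w, hw⟩⟩
  exact Nat.card_pos

lemma Iso.mdeg_eq {G : SimpleGraph V} {H : SimpleGraph W} (e : G ≃g H) (v : V) :
    mdeg H (e v) = mdeg G v :=
  (Nat.card_congr (e.mapNeighborSet v)).symm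

lemma Iso.prod_mdeg_eq [Fintype V] [Fintype W] {G : SimpleGraph V} {H : SimpleGraph W}
    (e : G ≃g H) : ∏ w, mdeg H w = ∏ v, mdeg G v :=
  (Fintype.prod_equiv e.toEquiv _ _ fun v => (Iso.mdeg_eq e v).symm).symm

lemma mZ1_eq_sq [Fintype V] (G : SimpleGraph V) : mZ1 G = (∏ v, mdeg G v) ^ 2 :=
  prod_pow _ _ _

section SepGraphDegrees

variable [Fintype V] [DecidableEq V] {A B : Finset V}

lemma mdeg_sepGraph_of_mem_left (hAB : Disjoint A B) {v : V} (hv : v ∈ A) :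
    mdeg (sepGraph ↑A ↑B) v = Fintype.card V - #B - 1 := by
  have hvB : v ∉ B := Finset.disjoint_left.1 hAB hv
  have : (sepGraph ↑A ↑B).neighborSet v = ↑(insert v B)ᶜ := by
    ext w
    simp only [mem_neighborSet, sepGraph_adj, coe_compl, coe_insert, Set.mem_compl_iff,
      Set.mem_insert_iff, mem_coe]
    grind [Finset.disjoint_left]
  rw [mdeg, this, Nat.card_coe_set_eq, Set.ncard_coe_finset, card_compl,
    card_insert_of_notMem hvB]
  omega

lemma mdeg_sepGraph_of_mem_right (hAB : Disjoint A B) {v : V} (hv : v ∈ B) :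
    mdeg (sepGraph ↑A ↑B) v = Fintype.card V - #A - 1 := by
  rw [sepGraph_comm]
  exact mdeg_sepGraph_of_mem_left hAB.symm hv

lemma mdeg_sepGraph_of_notMem {v : V} (hvA : v ∉ A) (hvB : v ∉ B) :
    mdeg (sepGraph ↑A ↑B) v = Fintype.card V - 1 := by
  have : (sepGraph ↑A ↑B).neighborSet v = ↑({v}ᶜ : Finset V) := by
    ext w
    simp only [mem_neighborSet, sepGraph_adj, coe_compl, coe_singleton, Set.mem_compl_iff,
      Set.mem_singleton_iff, mem_coe]
    grind
  rw [mdeg, this, Nat.card_coe_set_eq, Set.ncard_coe_finset, card_compl, card_singleton]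

lemma prod_mdeg_sepGraph (hAB : Disjoint A B) :
    (∏ v, mdeg (sepGraph (A : Set V) B) v) = (Fintype.card V - #B - 1) ^ #A *
      (Fintype.card V - 1) ^ (Fintype.card V - #A - #B) * (Fintype.card V - #A - 1) ^ #B := by
  rw [← prod_mul_prod_compl (A ∪ B), Finset.prod_union hAB,
    prod_eq_pow_card fun v hv => mdeg_sepGraph_of_mem_left hAB hv,
    prod_eq_pow_card fun v hv => mdeg_sepGraph_of_mem_right hAB hv,
    prod_eq_pow_card fun v hv => mdeg_sepGraph_of_notMem (by simp_all) (by simp_all),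
    card_compl, card_union_of_disjoint hAB, Nat.sub_add_eq]
  ring

end SepGraphDegrees

lemma knk_eq_sepGraph (n k : ℕ) :
    KnK n k = sepGraph ↑({v | (v : ℕ) = 0} : Finset (Fin n))
      ↑({v | k < (v : ℕ)} : Finset (Fin n)) := by
  ext u v
  simp only [KnK, fromRel_adj, sepGraph_adj, coe_filter, mem_univ, true_and,
    Set.mem_ofPred_eq, ne_eq, ← Fin.val_inj]
  omega

lemma knk_self (n : ℕ) : KnK n (n - 1) = ⊤ := by
  ext u v
  simp only [KnK, fromRel_adj, top_adj, ne_eq, ← Fin.val_inj]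
  omega

lemma card_filter_val_eq_zero {n : ℕ} (hn : 0 < n) : #{v : Fin n | (v : ℕ) = 0} = 1 := by
  obtain ⟨m, rfl⟩ := Nat.exists_eq_add_of_lt hn
  simp [Fin.val_eq_zero_iff, filter_eq']

lemma card_filter_lt_val (n k : ℕ) : #{v : Fin n | k < (v : ℕ)} = n - k - 1 := by
  have := card_filter_add_card_filter_not (s := univ) fun v : Fin n => (v : ℕ) < k + 1
  simp only [Fin.card_filter_val_lt, not_lt, card_univ, Fintype.card_fin, Nat.succ_le_iff] at this
  omega

lemma prod_mdeg_knk {n k : ℕ} (hn : 0 < n) (hk : k ≤ n - 1) :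
    ∏ v, mdeg (KnK n k) v = k * (n - 1) ^ k * (n - 2) ^ (n - k - 1) := by
  rw [knk_eq_sepGraph, prod_mdeg_sepGraph (disjoint_filter.2 fun v _ h => by omega),
    Fintype.card_fin, card_filter_val_eq_zero hn, card_filter_lt_val,
    show n - (n - k - 1) - 1 = k by omega, show n - 1 - (n - k - 1) = k by omega,
    show n - 1 - 1 = n - 2 by omega, pow_one]

lemma nonempty_sepGraph_iso_knk [Fintype V] [DecidableEq V] {A B : Finset V}
    (hAB : Disjoint A B) {n k : ℕ} (hV : Fintype.card V = n) (hA : #A = 1) (hB : #B = n - k - 1) :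
    Nonempty (sepGraph (A : Set V) B ≃g KnK n k) := by
  have hn : 0 < n := by have := card_le_univ A; omega
  obtain ⟨e, he⟩ := exists_equiv_mem_iff_mem (A' := {v : Fin n | (v : ℕ) = 0})
    (B' := {v : Fin n | k < (v : ℕ)}) hAB (disjoint_filter.2 fun v _ h => by omega)
    (by rw [hV, Fintype.card_fin]) (by rw [hA, card_filter_val_eq_zero hn])
    (by rw [hB, card_filter_lt_val])
  rw [knk_eq_sepGraph]
  exact ⟨Iso.sepGraph e (fun x => by simpa using (he x).1) (fun x => by simpa using (he x).2)⟩

end SimpleGraph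

lemma IsVertexCut.nonempty {V : Type*} {G : SimpleGraph V} {S : Finset V} (hG : G.Connected)
    (h : IsVertexCut G S) : S.Nonempty := by
  rw [Finset.nonempty_iff_ne_empty]
  rintro rfl
  apply h.2
  rw [coe_empty, Set.compl_empty]
  exact (induceUnivIso G).connected_iff.2 hG

lemma IsVertexCut.exists_le_sepGraph {V : Type*} [Fintype V] [DecidableEq V]
    {G : SimpleGraph V} {S : Finset V} (h : IsVertexCut G S) :
    ∃ A B : Finset V, Disjoint A B ∧ A ∪ B = Sᶜ ∧ A.Nonempty ∧ B.Nonempty ∧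
      G ≤ sepGraph (A : Set V) B := by
  classical
  obtain ⟨hne, hdisc⟩ := h
  have := hne.to_subtype
  set H := G.induce ((S : Set V)ᶜ)
  obtain ⟨u, w, huw⟩ : ∃ u w, ¬H.Reachable u w := by
    by_contra! hreach
    exact hdisc ⟨hreach⟩
  let A : Finset V := {x | ∃ hx : x ∉ S, H.Reachable u ⟨x, hx⟩}
  have hAS : ∀ x ∈ A, x ∉ S := fun x hx => (mem_filter.1 hx).2.1
  have hclosed : ∀ x ∈ A, ∀ y, y ∉ S → G.Adj x y → y ∈ A := by
    intro x hx y hy hxy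
    obtain ⟨_, hux⟩ := (mem_filter.1 hx).2
    exact mem_filter.2 ⟨mem_univ y, hy, hux.trans (Adj.reachable (by simpa [H] using hxy))⟩
  refine ⟨A, Sᶜ \ A, disjoint_sdiff, union_sdiff_of_subset fun x hx => mem_compl.2 (hAS x hx),
    ⟨u, mem_filter.2 ⟨mem_univ _, u.2, .refl _⟩⟩, ⟨w, ?_⟩, le_sepGraph_iff.2 ?_⟩
  · refine mem_sdiff.2 ⟨mem_compl.2 w.2, fun hw => huw ?_⟩
    obtain ⟨_, huw'⟩ := (mem_filter.1 hw).2
    exact huw'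
  · intro x hx y hy hxy
    obtain ⟨hyS, hyA⟩ := mem_sdiff.1 (mem_coe.1 hy)
    exact hyA (hclosed x hx y (mem_compl.1 hyS) hxy)

lemma IsVertexCut.prod_mdeg_le {V : Type*} [Fintype V] [DecidableEq V] {G : SimpleGraph V}
    {S : Finset V} {n k : ℕ} (hcut : IsVertexCut G S) (hV : Fintype.card V = n)
    (hk : k ≤ n - 1) (hG : G.Connected) (hS : #S ≤ k) :
    ∏ v, mdeg G v ≤ k * (n - 1) ^ k * (n - 2) ^ (n - k - 1) ∧
      (∏ v, mdeg G v = k * (n - 1) ^ k * (n - 2) ^ (n - k - 1) →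
        Nonempty (G ≃g KnK n k)) := by
  obtain ⟨A, B, hAB, hABS, ⟨x, hx⟩, ⟨y, hy⟩, hGH⟩ := hcut.exists_le_sepGraph
  have hsep : #A + #B + #S = n := by
    rw [← card_union_of_disjoint hAB, hABS, card_compl, hV]
    have := card_le_univ S
    omega
  have hS₀ := (hcut.nonempty hG).card_pos
  have hA₀ := card_pos.2 ⟨x, hx⟩
  have hB₀ := card_pos.2 ⟨y, hy⟩
  obtain ⟨hle, hlt⟩ :=
    sep_bound_le_and_lt (n := n) (k := k) hA₀ hB₀ (by omega) (by omega) hk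
  have hprod := prod_le_prod' fun v (_ : v ∈ univ) => mdeg_le_of_le hGH v
  rw [prod_mdeg_sepGraph hAB, hV] at hprod
  refine ⟨hprod.trans hle, fun heq => ?_⟩
  have hHeq := le_antisymm hle (heq ▸ hprod)
  have hshape : (#A = 1 ∨ #B = 1) ∧ #S = k := by
    by_contra hne
    exact (hlt (by omega)).ne hHeq
  have : Nontrivial V := nontrivial_of_ne x y fun h => Finset.disjoint_left.1 hAB hx (h ▸ hy)
  obtain rfl : G = sepGraph (A : Set V) B :=
    eq_of_le_of_prod_mdeg_eq hGH hG.mdeg_pos (by rw [heq, ← hHeq, prod_mdeg_sepGraph hAB, hV])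
  rcases hshape with ⟨hA | hB, hSk⟩
  · exact nonempty_sepGraph_iso_knk hAB hV hA (by omega)
  · rw [sepGraph_comm]
    exact nonempty_sepGraph_iso_knk hAB.symm hV hB (by omega)

theorem stmt0_general (n k : ℕ) (hk2 : k ≤ n - 1)
    (G : SimpleGraph (Fin n)) (hG : G.Connected) (hκ : VertexConnAtMost G k) :
    mZ1 G ≤ k ^ 2 * (n - 1) ^ (2 * k) * (n - 2) ^ (2 * (n - k - 1)) ∧
      (mZ1 G = k ^ 2 * (n - 1) ^ (2 * k) * (n - 2) ^ (2 * (n - k - 1)) ↔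
        Nonempty (G ≃g KnK n k)) := by
  have hn : 0 < n := Fin.pos_iff_nonempty.2 hG.nonempty
  suffices h : ∏ v, mdeg G v ≤ k * (n - 1) ^ k * (n - 2) ^ (n - k - 1) ∧
      (∏ v, mdeg G v = k * (n - 1) ^ k * (n - 2) ^ (n - k - 1) ↔ Nonempty (G ≃g KnK n k)) by
    rw [mZ1_eq_sq, show k ^ 2 * (n - 1) ^ (2 * k) * (n - 2) ^ (2 * (n - k - 1))
      = (k * (n - 1) ^ k * (n - 2) ^ (n - k - 1)) ^ 2 by ring]
    exact ⟨Nat.pow_le_pow_left h.1 2, (Nat.pow_left_injective two_ne_zero).eq_iff.trans h.2⟩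
  rcases hκ with ⟨S, hS, hcut⟩ | ⟨rfl, hcard⟩
  · obtain ⟨hle, hiso⟩ := hcut.prod_mdeg_le (Fintype.card_fin n) hk2 hG hS
    refine ⟨hle, hiso, fun ⟨e⟩ => ?_⟩
    rw [← Iso.prod_mdeg_eq e, prod_mdeg_knk hn hk2]
  · obtain rfl : k = n - 1 := by rw [Fintype.card_fin] at hcard; omega
    rw [← knk_self, prod_mdeg_knk hn hk2]
    exact ⟨le_rfl, iff_of_true rfl ⟨Iso.refl⟩⟩

theorem stmt0 (n k : ℕ) (hn : 3 ≤ n) (hk1 : 1 ≤ k) (hk2 : k ≤ n - 1)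
    (G : SimpleGraph (Fin n)) (hG : G.Connected) (hκ : VertexConnAtMost G k) :
    mZ1 G ≤ k ^ 2 * (n - 1) ^ (2 * k) * (n - 2) ^ (2 * (n - k - 1)) ∧
      (mZ1 G = k ^ 2 * (n - 1) ^ (2 * k) * (n - 2) ^ (2 * (n - k - 1)) ↔
        Nonempty (G ≃g KnK n k)) :=
  stmt0_general n k hk2 G hG hκ
end

section
/- Let n ≥ 3 and 1 ≤ k ≤ n−1 be integers, and let G be a simple connected graph on n vertices with vertex connectivity κ(G) ≤ k. Then Π2(G) ≤ k^k · (n−1)^{k(n−1)} · (n−2)^{(n−2)(n−k−1)}, with equality if and only if G is isomorphic to K_n^k. -/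
open SimpleGraph Finset

section Numeric

lemma pow_self_mono {x y : ℕ} (h : x ≤ y) : x ^ x ≤ y ^ y := by
  rcases Nat.eq_zero_or_pos y with rfl | hy
  · interval_cases x <;> simp
  · calc x ^ x ≤ y ^ x := Nat.pow_le_pow_left h x
    _ ≤ y ^ y := Nat.pow_le_pow_right hy h

lemma pow_self_strict {x y : ℕ} (hx : 1 ≤ x) (h : x < y) : x ^ x < y ^ y := by
  calc x ^ x ≤ y ^ x := Nat.pow_le_pow_left h.le x
  _ < y ^ y := Nat.pow_lt_pow_right (by omega) h

lemma pow_self_inj {x y : ℕ} (hx : 1 ≤ x) (hy : 1 ≤ y) (h : x ^ x = y ^ y) : x = y := by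
  rcases lt_trichotomy x y with hlt | he | hlt
  · exact absurd h (pow_self_strict hx hlt).ne
  · exact he
  · exact absurd h.symm (pow_self_strict hy hlt).ne

/-- Core estimate: `(s+q)^s < s^(s+2q-2)` for `s ≥ 3`, `2 ≤ q ≤ s`. -/
lemma N1base (s q : ℕ) (hs : 3 ≤ s) (hq : 2 ≤ q) (hqs : q ≤ s) :
    (s + q) ^ s < s ^ (s + (2 * q - 2)) := by
  have hs0 : (0:ℝ) < (s:ℝ) := by positivity
  have key : ((s:ℝ) + q) ^ s < (s:ℝ) ^ (s + (2*q-2)) := by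
    have h1 : ((s:ℝ) + q) ^ s = (s:ℝ) ^ s * (1 + (q:ℝ)/s) ^ s := by
      rw [← mul_pow]; congr 1; field_simp
    have h2 : (1 + (q:ℝ)/s) ^ s ≤ Real.exp q := by
      calc (1 + (q:ℝ)/s) ^ s ≤ (Real.exp ((q:ℝ)/s)) ^ s := by
            apply pow_le_pow_left₀ (by positivity)
            linarith [Real.add_one_le_exp ((q:ℝ)/s)]
      _ = Real.exp ((q:ℝ)/s * s) := by rw [← Real.exp_nat_mul]; ring_nf
      _ = Real.exp q := by congr 1; field_simp
    have h3 : Real.exp (q:ℝ) < 3 ^ q := by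
      have he : Real.exp (q:ℝ) = (Real.exp 1) ^ q := by
        rw [← Real.exp_nat_mul]; ring_nf
      rw [he]
      exact pow_lt_pow_left₀ (lt_of_lt_of_le Real.exp_one_lt_d9 (by norm_num))
        (Real.exp_pos 1).le (by omega)
    have h4 : (3:ℝ) ^ q ≤ (s:ℝ) ^ (2*q-2) := by
      calc (3:ℝ) ^ q ≤ (3:ℝ) ^ (2*q-2) := by
            apply pow_le_pow_right₀ (by norm_num) (by omega)
      _ ≤ (s:ℝ) ^ (2*q-2) := by
            apply pow_le_pow_left₀ (by norm_num)
            exact_mod_cast hs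
    calc ((s:ℝ) + q) ^ s = (s:ℝ) ^ s * (1 + (q:ℝ)/s) ^ s := h1
    _ ≤ (s:ℝ) ^ s * Real.exp q := by
        apply mul_le_mul_of_nonneg_left h2 (by positivity)
    _ < (s:ℝ) ^ s * 3 ^ q := by
        apply mul_lt_mul_of_pos_left h3 (by positivity)
    _ ≤ (s:ℝ) ^ s * (s:ℝ) ^ (2*q-2) := by
        apply mul_le_mul_of_nonneg_left h4 (by positivity)
    _ = (s:ℝ) ^ (s + (2*q-2)) := by rw [pow_add]
  exact_mod_cast (by push_cast; exact key : ((s + q : ℕ) : ℝ) ^ s < ((s:ℕ):ℝ) ^ (s + (2*q-2)))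

/-- `(s+q)^r < s^s` when `s = r + 2q - 2`, `s ≥ 3`, `q ≥ 2`. -/
lemma N1a (s q r : ℕ) (hs : 3 ≤ s) (hq : 2 ≤ q) (hqs : q ≤ s) (hsr : s = r + (2 * q - 2)) :
    (s + q) ^ r < s ^ s := by
  have h := N1base s q hs hq hqs
  have h2 : (s + q) ^ r * (s + q) ^ (2*q-2) < s ^ s * s ^ (2*q-2) := by
    rw [← pow_add, ← pow_add, ← hsr]
    exact h
  have h3 : s ^ s * s ^ (2*q-2) ≤ s ^ s * (s+q) ^ (2*q-2) := by
    apply Nat.mul_le_mul_left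
    exact Nat.pow_le_pow_left (by omega) _
  exact Nat.lt_of_mul_lt_mul_right (lt_of_lt_of_le h2 h3)

lemma nat_mul_lt_left {c a b : ℕ} (hc : 0 < c) (h : a < b) : c * a < c * b := by
  exact mul_lt_mul_of_pos_left h hc

lemma nat_mul_lt_mul {a b c d : ℕ} (h1 : a < b) (h2 : c ≤ d) (hc : 0 < c) : a * c < b * d :=
  lt_of_lt_of_le ((Nat.mul_lt_mul_right hc).mpr h1) (Nat.mul_le_mul_left b h2)

/-- Merge step: with `a = α+1 ≥ 2`, `b = β+1 ≥ 2`, `s = σ+1`, splitting is strictly worse. -/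
lemma Nmerge (σ α β : ℕ) (hα : 1 ≤ α) (hβ : 1 ≤ β) :
    (σ+α+1) ^ ((σ+α+1) * (α+1)) * ((σ+β+1) ^ ((σ+β+1) * (β+1)))
      < (σ+1) ^ (σ+1) * ((σ+α+β+1) ^ ((σ+α+β+1) * (α+β+1))) := by
  set N := σ+α+β+1 with hN
  set E := (σ+α+1) * (α+1) + (σ+β+1) * (β+1) with hE
  set F := N * (α+β+1) with hF
  have hEF : E + 2*(α*β) = F + σ + 1 := by simp only [hE, hF, hN]; ring
  have hL : (σ+α+1) ^ ((σ+α+1) * (α+1)) * ((σ+β+1) ^ ((σ+β+1) * (β+1))) ≤ N ^ E := by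
    rw [hE, pow_add]
    exact Nat.mul_le_mul (Nat.pow_le_pow_left (by omega) _) (Nat.pow_le_pow_left (by omega) _)
  have hN2 : 2 ≤ N := by omega
  rcases le_or_gt (σ + 1) (2*(α*β)) with hcase | hcase
  · rcases Nat.lt_or_ge (σ+1) (2*(α*β)) with hlt | hge
    · -- E < F
      have : E < F := by omega
      calc (σ+α+1) ^ ((σ+α+1) * (α+1)) * ((σ+β+1) ^ ((σ+β+1) * (β+1))) ≤ N ^ E := hL
      _ < N ^ F := Nat.pow_lt_pow_right hN2 this
      _ ≤ (σ+1) ^ (σ+1) * N ^ F := Nat.le_mul_of_pos_left _ (by positivity)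
    · -- E = F, σ+1 = 2αβ ≥ 2
      have hEeq : E = F := by omega
      have h2 : 2 ≤ σ + 1 := by omega
      calc (σ+α+1) ^ ((σ+α+1) * (α+1)) * ((σ+β+1) ^ ((σ+β+1) * (β+1))) ≤ N ^ E := hL
      _ = 1 * N ^ F := by rw [hEeq, one_mul]
      _ < (σ+1) ^ (σ+1) * N ^ F :=
          nat_mul_lt_mul (Nat.one_lt_pow (by omega) (by omega)) le_rfl (by positivity)
  · -- E = F + r with r = σ+1-2αβ ≥ 1
    set r := σ + 1 - 2*(α*β) with hr
    have hErF : E = F + r := by omega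
    have hab : α + β ≤ α*β + 1 := by nlinarith
    have hNle : N ≤ (σ+1) + (α*β+1) := by omega
    have hkey : N ^ r < (σ+1) ^ (σ+1) := by
      calc N ^ r ≤ ((σ+1) + (α*β+1)) ^ r := Nat.pow_le_pow_left hNle r
      _ < (σ+1) ^ (σ+1) := by
          apply N1a (σ+1) (α*β+1) r (by omega) (by omega) (by omega)
          omega
    calc (σ+α+1) ^ ((σ+α+1) * (α+1)) * ((σ+β+1) ^ ((σ+β+1) * (β+1))) ≤ N ^ E := hL
    _ = N ^ r * N ^ F := by rw [hErF, pow_add, Nat.mul_comm]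
    _ < (σ+1) ^ (σ+1) * N ^ F := nat_mul_lt_mul hkey le_rfl (by positivity)

/-- The one-cut-vertex profile value. -/
def fval (n s : ℕ) : ℕ := s ^ s * (n-1) ^ ((n-1) * s) * (n-2) ^ ((n-2) * (n - s - 1))

lemma fstep (n s : ℕ) (hn : 3 ≤ n) (hs : 1 ≤ s) (hsn : s + 1 ≤ n - 1) :
    fval n s < fval n (s+1) := by
  have hn1 : 0 < n - 1 := by omega
  have hn2 : 0 < n - 2 := by omega
  have e1 : (n-2) ^ ((n-2) * (n - s - 1)) =
      (n-2) ^ ((n-2) * (n - (s+1) - 1)) * (n-2) ^ (n-2) := by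
    rw [← pow_add]
    congr 1
    have h : n - s - 1 = (n - (s+1) - 1) + 1 := by omega
    rw [h]; ring
  have e2 : (n-1) ^ ((n-1) * (s+1)) = (n-1) ^ ((n-1) * s) * (n-1) ^ (n-1) := by
    rw [Nat.mul_succ, pow_add]
  have hstrict : s ^ s * (n-2)^(n-2) < (s+1)^(s+1) * (n-1)^(n-1) :=
    nat_mul_lt_mul (pow_self_strict hs (by omega)) (pow_self_mono (by omega)) (by positivity)
  unfold fval
  rw [e1, e2]
  calc s ^ s * (n-1) ^ ((n-1)*s) * ((n-2) ^ ((n-2) * (n-(s+1)-1)) * (n-2) ^ (n-2))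
      = (s ^ s * (n-2)^(n-2)) * ((n-1) ^ ((n-1)*s) * (n-2) ^ ((n-2) * (n-(s+1)-1))) := by
        ring
  _ < ((s+1)^(s+1) * (n-1)^(n-1)) * ((n-1) ^ ((n-1)*s) * (n-2) ^ ((n-2) * (n-(s+1)-1))) :=
        nat_mul_lt_mul hstrict le_rfl (by positivity)
  _ = (s+1)^(s+1) * ((n-1) ^ ((n-1)*s) * (n-1)^(n-1)) * (n-2) ^ ((n-2) * (n-(s+1)-1)) := by
        ring

lemma fmono (n s k : ℕ) (hn : 3 ≤ n) (hs : 1 ≤ s) (hsk : s ≤ k) (hk : k ≤ n - 1) :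
    fval n s ≤ fval n k ∧ (s < k → fval n s < fval n k) := by
  induction k with
  | zero => exact absurd hsk (by omega)
  | succ m ih =>
    rcases Nat.lt_or_ge s (m+1) with hlt | hge
    · have hm : s ≤ m := by omega
      have hstep := fstep n m hn (by omega) (by omega)
      have := ih hm (by omega)
      rcases Nat.eq_or_lt_of_le hm with rfl | hsm
      · exact ⟨hstep.le, fun _ => hstep⟩
      · exact ⟨le_of_lt (lt_of_le_of_lt this.1 hstep),
          fun _ => lt_of_le_of_lt this.1 hstep⟩
    · have : s = m + 1 := by omega
      subst this
      exact ⟨le_rfl, fun h => absurd h (lt_irrefl _)⟩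

/-- Master numeric bound. -/
lemma Pkey (n k s a b : ℕ) (hs : 1 ≤ s) (ha : 1 ≤ a) (hb : 1 ≤ b)
    (hsum : s + a + b = n) (hsk : s ≤ k) (hk : k ≤ n - 1) :
    (n-1) ^ ((n-1)*s) * (s+a-1) ^ ((s+a-1)*a) * (s+b-1) ^ ((s+b-1)*b) ≤ fval n k
    ∧ ((n-1) ^ ((n-1)*s) * (s+a-1) ^ ((s+a-1)*a) * (s+b-1) ^ ((s+b-1)*b) = fval n k
       → s = k ∧ (a = 1 ∨ b = 1)) := by
  have hn : 3 ≤ n := by omega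
  have hmono := fmono n s k hn hs hsk hk
  by_cases hab : a = 1 ∨ b = 1
  · have hPf : (n-1) ^ ((n-1)*s) * (s+a-1) ^ ((s+a-1)*a) * (s+b-1) ^ ((s+b-1)*b)
        = fval n s := by
      rcases hab with rfl | rfl
      · have e1 : s + 1 - 1 = s := by omega
        have e2 : s + b - 1 = n - 2 := by omega
        have e3 : n - s - 1 = b := by omega
        unfold fval
        rw [e1, e2, e3, mul_one]
        ring
      · have e1 : s + 1 - 1 = s := by omega
        have e2 : s + a - 1 = n - 2 := by omega
        have e3 : n - s - 1 = a := by omega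
        unfold fval
        rw [e1, e2, e3, mul_one]
        ring
    rw [hPf]
    refine ⟨hmono.1, fun heq => ⟨?_, hab⟩⟩
    by_contra hne
    exact absurd heq (hmono.2 (by omega)).ne
  · push_neg at hab
    have ha2 : 2 ≤ a := by omega
    have hb2 : 2 ≤ b := by omega
    have hPlt : (n-1) ^ ((n-1)*s) * (s+a-1) ^ ((s+a-1)*a) * (s+b-1) ^ ((s+b-1)*b)
        < fval n s := by
      obtain ⟨σ, rfl⟩ : ∃ σ, s = σ + 1 := ⟨s - 1, by omega⟩
      obtain ⟨α, rfl⟩ : ∃ α, a = α + 1 := ⟨a - 1, by omega⟩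
      obtain ⟨β, rfl⟩ : ∃ β, b = β + 1 := ⟨b - 1, by omega⟩
      have hα : 1 ≤ α := by omega
      have hβ : 1 ≤ β := by omega
      have e1 : σ + 1 + (α+1) - 1 = σ + α + 1 := by omega
      have e2 : σ + 1 + (β+1) - 1 = σ + β + 1 := by omega
      have e3 : n - 2 = σ + α + β + 1 := by omega
      have e4 : n - (σ+1) - 1 = α + β + 1 := by omega
      unfold fval
      rw [e1, e2, e3, e4, mul_assoc]
      have hpos : 0 < (n-1) ^ ((n-1)*(σ+1)) := by
        have : 0 < n - 1 := by omega
        positivity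
      calc (n-1) ^ ((n-1)*(σ+1)) *
            ((σ+α+1) ^ ((σ+α+1)*(α+1)) * (σ+β+1) ^ ((σ+β+1)*(β+1)))
          < (n-1) ^ ((n-1)*(σ+1)) *
            ((σ+1) ^ (σ+1) * (σ+α+β+1) ^ ((σ+α+β+1)*(α+β+1))) :=
            nat_mul_lt_left hpos (Nmerge σ α β hα hβ)
      _ = (σ+1) ^ (σ+1) * (n-1) ^ ((n-1)*(σ+1)) *
            (σ+α+β+1) ^ ((σ+α+β+1)*(α+β+1)) := by ring
    have hPk := lt_of_lt_of_le hPlt hmono.1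
    exact ⟨hPk.le, fun heq => absurd heq hPk.ne⟩

end Numeric

section Graph

/-- adjacency pattern on 3 classes: class 0 (the cut-off vertex) is not adjacent
to class 2. -/
def pOK (i j : Fin 3) : Prop := ¬(i = 0 ∧ j = 2) ∧ ¬(i = 2 ∧ j = 0)

lemma mdeg_eq_degree {n : ℕ} (G : SimpleGraph (Fin n)) [DecidableRel G.Adj] (v : Fin n) :
    mdeg G v = G.degree v := by
  rw [mdeg, Nat.card_eq_fintype_card, SimpleGraph.card_neighborSet_eq_degree]

lemma mdeg_eq_filter {n : ℕ} (G : SimpleGraph (Fin n)) [DecidableRel G.Adj] (v : Fin n) :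
    mdeg G v = (univ.filter (fun x => G.Adj v x)).card := by
  rw [mdeg_eq_degree, SimpleGraph.degree, SimpleGraph.neighborFinset_eq_filter]

lemma mdeg_pos {n : ℕ} {G : SimpleGraph (Fin n)} (hG : G.Connected) (hn : 2 ≤ n) (v : Fin n) :
    1 ≤ mdeg G v := by
  obtain ⟨w, hw⟩ := Fintype.exists_ne_of_one_lt_card (by simp; omega) v
  obtain ⟨p⟩ := hG.preconnected v w
  have hadj := p.adj_snd (SimpleGraph.Walk.not_nil_of_ne (Ne.symm hw))
  have : Nonempty (G.neighborSet v) := ⟨⟨p.getVert 1, hadj⟩⟩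
  rw [mdeg]
  exact Nat.card_pos

lemma fin3_cases (j : Fin 3) : j = 0 ∨ j = 1 ∨ j = 2 := by omega

lemma fiber_facts {n : ℕ} (c : Fin n → Fin 3) :
    (univ.filter (fun x => c x = 0)) ∪ (univ.filter (fun x => c x = 1)) ∪
      (univ.filter (fun x => c x = 2)) = univ ∧
    Disjoint (univ.filter (fun x => c x = 0)) (univ.filter (fun x => c x = 1)) ∧
    Disjoint ((univ.filter (fun x => c x = 0)) ∪ (univ.filter (fun x => c x = 1)))
      (univ.filter (fun x => c x = 2)) := by
  refine ⟨?_, ?_, ?_⟩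
  · ext x
    simp only [Finset.mem_union, Finset.mem_filter, Finset.mem_univ, true_and, iff_true]
    rcases fin3_cases (c x) with h | h | h <;> simp [h]
  · rw [Finset.disjoint_left]
    intro x hx hx'
    simp only [Finset.mem_filter] at hx hx'
    rw [hx.2] at hx'
    exact absurd hx'.2 (by decide)
  · rw [Finset.disjoint_left]
    intro x hx hx'
    simp only [Finset.mem_union, Finset.mem_filter] at hx hx'
    rcases hx with h | h <;> rw [h.2] at hx' <;> exact absurd hx'.2 (by decide)

lemma fiber_prod {n : ℕ} (c : Fin n → Fin 3) (g : Fin n → ℕ) :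
    ∏ v : Fin n, g v =
      (∏ v ∈ univ.filter (fun x => c x = 0), g v) *
      (∏ v ∈ univ.filter (fun x => c x = 1), g v) *
      (∏ v ∈ univ.filter (fun x => c x = 2), g v) := by
  obtain ⟨hu, h01, h012⟩ := fiber_facts c
  rw [← Finset.prod_union h01, ← Finset.prod_union h012, hu]

lemma fiber_card {n : ℕ} (c : Fin n → Fin 3) :
    (univ.filter (fun x => c x = 0)).card + (univ.filter (fun x => c x = 1)).card +
      (univ.filter (fun x => c x = 2)).card = n := by
  obtain ⟨hu, h01, h012⟩ := fiber_facts c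
  have := congrArg Finset.card hu
  rwa [Finset.card_union_of_disjoint h012, Finset.card_union_of_disjoint h01,
    Finset.card_univ, Fintype.card_fin] at this

lemma mZ2_of_pattern {n k : ℕ} (hn : 3 ≤ n) (hk2 : k ≤ n - 1)
    {G : SimpleGraph (Fin n)} {c : Fin n → Fin 3}
    (hadj : ∀ x y, G.Adj x y ↔ x ≠ y ∧ pOK (c x) (c y))
    (h0 : (univ.filter (fun x => c x = 0)).card = 1)
    (h1 : (univ.filter (fun x => c x = 1)).card = k) :
    mZ2 G = k ^ k * (n-1) ^ ((n-1) * k) * (n-2) ^ ((n-2) * (n - k - 1)) := by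
  classical
  have hsum := fiber_card c
  have h2 : (univ.filter (fun x => c x = 2)).card = n - k - 1 := by omega
  have hne2 : (univ.filter (fun x => c x ≠ 2)).card = 1 + k := by
    have : (univ.filter (fun x => c x ≠ 2)) =
        (univ.filter (fun x => c x = 0)) ∪ (univ.filter (fun x => c x = 1)) := by
      ext x
      simp only [Finset.mem_filter, Finset.mem_univ, true_and, Finset.mem_union]
      rcases fin3_cases (c x) with h | h | h <;> rw [h] <;> simp
    rw [this, Finset.card_union_of_disjoint (fiber_facts c).2.1, h0, h1]
  have hne0 : (univ.filter (fun x => c x ≠ 0)).card = n - 1 := by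
    have : (univ.filter (fun x => c x ≠ 0)) =
        (univ.filter (fun x => c x = 1)) ∪ (univ.filter (fun x => c x = 2)) := by
      ext x
      simp only [Finset.mem_filter, Finset.mem_univ, true_and, Finset.mem_union]
      rcases fin3_cases (c x) with h | h | h <;> simp [h]
    rw [this, Finset.card_union_of_disjoint, h1, h2]
    · omega
    · rw [Finset.disjoint_left]
      intro x hx hx'
      simp only [Finset.mem_filter] at hx hx'
      rw [hx.2] at hx'
      exact absurd hx'.2 (by decide)
  have hdeg : ∀ v, mdeg G v =
      if c v = 0 then k else if c v = 1 then n - 1 else n - 2 := by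
    intro v
    rw [mdeg_eq_filter]
    rcases fin3_cases (c v) with hv | hv | hv
    · rw [hv, if_pos rfl]
      have he : univ.filter (fun x => G.Adj v x) = (univ.filter (fun x => c x ≠ 2)).erase v := by
        ext x
        simp [hadj, pOK, hv, eq_comm]
        try constructor
        all_goals tauto
      rw [he, Finset.card_erase_of_mem, hne2]
      · omega
      · simp only [Finset.mem_filter, Finset.mem_univ, true_and, hv, ne_eq]
        decide
    · rw [hv, if_neg (by decide), if_pos rfl]
      have he : univ.filter (fun x => G.Adj v x) = univ.erase v := by
        ext x
        simp [hadj, pOK, hv, eq_comm]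
        try constructor
        all_goals tauto
      rw [he, Finset.card_erase_of_mem (Finset.mem_univ v), Finset.card_univ, Fintype.card_fin]
    · rw [hv, if_neg (by decide), if_neg (by decide)]
      have he : univ.filter (fun x => G.Adj v x) = (univ.filter (fun x => c x ≠ 0)).erase v := by
        ext x
        simp [hadj, pOK, hv, eq_comm]
        try constructor
        all_goals tauto
      rw [he, Finset.card_erase_of_mem, hne0]
      · omega
      · simp only [Finset.mem_filter, Finset.mem_univ, true_and, hv, ne_eq]
        decide
  unfold mZ2
  rw [fiber_prod c]
  have hc0 : ∀ v ∈ univ.filter (fun x => c x = 0), (mdeg G v) ^ (mdeg G v) = k ^ k := by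
    intro v hv
    simp only [Finset.mem_filter] at hv
    rw [hdeg v, hv.2, if_pos rfl]
  have hc1 : ∀ v ∈ univ.filter (fun x => c x = 1),
      (mdeg G v) ^ (mdeg G v) = (n-1) ^ (n-1) := by
    intro v hv
    simp only [Finset.mem_filter] at hv
    rw [hdeg v, hv.2, if_neg (by decide), if_pos rfl]
  have hc2 : ∀ v ∈ univ.filter (fun x => c x = 2),
      (mdeg G v) ^ (mdeg G v) = (n-2) ^ (n-2) := by
    intro v hv
    simp only [Finset.mem_filter] at hv
    rw [hdeg v, hv.2, if_neg (by decide), if_neg (by decide)]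
  rw [Finset.prod_congr rfl hc0, Finset.prod_congr rfl hc1, Finset.prod_congr rfl hc2,
    Finset.prod_const, Finset.prod_const, Finset.prod_const, h0, h1, h2, pow_one,
    ← pow_mul, ← pow_mul]

lemma iso_of_pattern {n : ℕ} {G H : SimpleGraph (Fin n)} {c d : Fin n → Fin 3}
    (hG : ∀ x y, G.Adj x y ↔ x ≠ y ∧ pOK (c x) (c y))
    (hH : ∀ x y, H.Adj x y ↔ x ≠ y ∧ pOK (d x) (d y))
    (hcard : ∀ i, (univ.filter (fun x => c x = i)).card
      = (univ.filter (fun x => d x = i)).card) :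
    Nonempty (G ≃g H) := by
  classical
  have hfib : ∀ i : Fin 3, Nonempty ({x // c x = i} ≃ {x // d x = i}) := by
    intro i
    rw [← Fintype.card_eq, Fintype.card_subtype, Fintype.card_subtype]
    exact hcard i
  let e : Fin n ≃ Fin n := Equiv.ofFiberEquiv (f := c) (g := d) (fun i => (hfib i).some)
  have he : ∀ x, d (e x) = c x := fun x => Equiv.ofFiberEquiv_map _ x
  refine ⟨{ toEquiv := e, map_rel_iff' := ?_ }⟩
  intro x y
  rw [hH, hG, he, he]
  simp

lemma mdeg_iso {V W : Type*} {G : SimpleGraph V} {H : SimpleGraph W} (e : G ≃g H) (v : V) :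
    mdeg G v = mdeg H (e v) := Nat.card_congr (e.mapNeighborSet v)

lemma mZ2_iso {n : ℕ} {G H : SimpleGraph (Fin n)} (e : G ≃g H) : mZ2 G = mZ2 H := by
  unfold mZ2
  rw [← Equiv.prod_comp e.toEquiv (fun v => mdeg H v ^ mdeg H v)]
  exact Finset.prod_congr rfl fun v _ => by rw [mdeg_iso e v]; rfl

lemma card_filter_val {n : ℕ} (p : ℕ → Prop) [DecidablePred p] :
    ((univ : Finset (Fin n)).filter (fun x => p x.val)).card
      = ((Finset.range n).filter p).card := by
  apply Finset.card_bij (fun x _ => x.val)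
  · intro a ha
    simp only [Finset.mem_filter, Finset.mem_univ, true_and] at ha
    simp only [Finset.mem_filter, Finset.mem_range]
    exact ⟨a.isLt, ha⟩
  · intro a _ b _ h
    exact Fin.ext h
  · intro b hb
    simp only [Finset.mem_filter, Finset.mem_range] at hb
    exact ⟨⟨b, hb.1⟩, by simp [hb.2], rfl⟩

/-- the canonical coloring of `K_n^k` -/
def cKnK (n k : ℕ) : Fin n → Fin 3 :=
  fun x => if x.val = 0 then 0 else if x.val ≤ k then 1 else 2

lemma cKnK_spec {n k : ℕ} (z : Fin n) :
    (cKnK n k z = 0 ↔ z.val = 0) ∧ (cKnK n k z = 1 ↔ (z.val ≠ 0 ∧ z.val ≤ k)) ∧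
      (cKnK n k z = 2 ↔ (z.val ≠ 0 ∧ k < z.val)) := by
  unfold cKnK
  split_ifs with h1 h2
  · exact ⟨iff_of_true rfl h1, iff_of_false (by decide) (by omega),
      iff_of_false (by decide) (by omega)⟩
  · exact ⟨iff_of_false (by decide) h1, iff_of_true rfl ⟨h1, h2⟩,
      iff_of_false (by decide) (by omega)⟩
  · exact ⟨iff_of_false (by decide) h1, iff_of_false (by decide) (by omega),
      iff_of_true rfl ⟨h1, by omega⟩⟩

lemma KnK_adj {n k : ℕ} (x y : Fin n) :
    (KnK n k).Adj x y ↔ x ≠ y ∧ pOK (cKnK n k x) (cKnK n k y) := by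
  rw [KnK, SimpleGraph.fromRel_adj]
  obtain ⟨h0x, h1x, h2x⟩ := cKnK_spec (k := k) x
  obtain ⟨h0y, h1y, h2y⟩ := cKnK_spec (k := k) y
  unfold pOK
  constructor
  · rintro ⟨hne, hr⟩
    have hval : x.val ≠ y.val := fun h => hne (Fin.ext h)
    refine ⟨hne, ?_, ?_⟩
    · rw [h0x, h2y]
      omega
    · rw [h2x, h0y]
      omega
  · rintro ⟨hne, ha, hb⟩
    rw [h0x, h2y] at ha
    rw [h2x, h0y] at hb
    have hval : x.val ≠ y.val := fun h => hne (Fin.ext h)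
    exact ⟨hne, by omega⟩

lemma range_filter_eq_zero (n : ℕ) (hn : 1 ≤ n) :
    ((Finset.range n).filter (fun a => a = 0)).card = 1 := by
  have : (Finset.range n).filter (fun a => a = 0) = {0} := by
    ext a
    simp only [Finset.mem_filter, Finset.mem_range, Finset.mem_singleton]
    omega
  rw [this, Finset.card_singleton]

lemma KnK_fiber0 {n k : ℕ} (hn : 1 ≤ n) :
    ((univ : Finset (Fin n)).filter (fun x => cKnK n k x = 0)).card = 1 := by
  classical
  have : ((univ : Finset (Fin n)).filter (fun x => cKnK n k x = 0))
      = (univ.filter (fun x => x.val = 0)) :=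
    Finset.filter_congr fun x _ => (cKnK_spec x).1
  rw [this]
  exact (card_filter_val _).trans (range_filter_eq_zero n hn)

lemma KnK_fiber1 {n k : ℕ} (hn : 1 ≤ n) (hk : k ≤ n - 1) :
    ((univ : Finset (Fin n)).filter (fun x => cKnK n k x = 1)).card = k := by
  classical
  have : ((univ : Finset (Fin n)).filter (fun x => cKnK n k x = 1))
      = (univ.filter (fun x => x.val ≠ 0 ∧ x.val ≤ k)) :=
    Finset.filter_congr fun x _ => (cKnK_spec x).2.1
  rw [this]
  refine (card_filter_val (fun a => a ≠ 0 ∧ a ≤ k)).trans ?_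
  have : ((Finset.range n).filter (fun a => a ≠ 0 ∧ a ≤ k)) = Finset.Icc 1 k := by
    ext a
    simp only [Finset.mem_filter, Finset.mem_range, Finset.mem_Icc]
    omega
  rw [this, Nat.card_Icc]
  omega

lemma prod_eq_forall {ι : Type*} {s : Finset ι} {f g : ι → ℕ}
    (h1 : ∀ i ∈ s, 0 < f i) (hle : ∀ i ∈ s, f i ≤ g i)
    (he : (∏ i ∈ s, f i) = ∏ i ∈ s, g i) : ∀ i ∈ s, f i = g i := by
  intro i hi
  by_contra hne
  exact absurd he (Finset.prod_lt_prod h1 hle ⟨i, hi, lt_of_le_of_ne (hle i hi) hne⟩).ne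

end Graph

lemma pattern_of_extremal {n : ℕ} {G : SimpleGraph (Fin n)} [DecidableRel G.Adj] (hn : 3 ≤ n)
    (S A B : Finset (Fin n)) (hSA : Disjoint S A) (hSB : Disjoint S B) (hABd : Disjoint A B)
    (hU : S ∪ A ∪ B = univ)
    (hnoedge : ∀ p ∈ A, ∀ q ∈ B, ¬ G.Adj p q)
    (hA1 : A.card = 1)
    (hdegS : ∀ v ∈ S, mdeg G v = n - 1)
    (hdegA : ∀ v ∈ A, mdeg G v = S.card)
    (hdegB : ∀ v ∈ B, mdeg G v = n - 2) :
    ∃ c : Fin n → Fin 3, (∀ x y, G.Adj x y ↔ x ≠ y ∧ pOK (c x) (c y)) ∧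
      (univ.filter (fun x => c x = 0)).card = 1 ∧
      (univ.filter (fun x => c x = 1)).card = S.card := by
  classical
  obtain ⟨u, hAu⟩ := Finset.card_eq_one.mp hA1
  have huA : u ∈ A := by rw [hAu]; exact Finset.mem_singleton_self u
  have huS : u ∉ S := fun h => Finset.disjoint_left.mp hSA h huA
  have huB : u ∉ B := fun h => Finset.disjoint_left.mp hABd huA h
  have hnf : ∀ v, mdeg G v = (G.neighborFinset v).card := fun v => mdeg_eq_degree G v
  have hpart : ∀ x : Fin n, x ∈ S ∨ x ∈ A ∨ x ∈ B := by
    intro x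
    have : x ∈ S ∪ A ∪ B := hU ▸ Finset.mem_univ x
    simp only [Finset.mem_union] at this
    tauto
  have hNu : G.neighborFinset u = S := by
    apply Finset.eq_of_subset_of_card_le
    · intro z hz
      rw [SimpleGraph.mem_neighborFinset] at hz
      rcases hpart z with h | h | h
      · exact h
      · exfalso
        rw [hAu, Finset.mem_singleton] at h
        subst h
        exact G.irrefl hz
      · exact absurd hz (hnoedge u huA z h)
    · rw [← hnf u, hdegA u huA]
  have hNS : ∀ v ∈ S, G.neighborFinset v = univ.erase v := by
    intro v hv
    apply Finset.eq_of_subset_of_card_le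
    · intro z hz
      rw [SimpleGraph.mem_neighborFinset] at hz
      exact Finset.mem_erase.mpr ⟨hz.ne', Finset.mem_univ z⟩
    · rw [← hnf v, hdegS v hv, Finset.card_erase_of_mem (Finset.mem_univ v),
        Finset.card_univ, Fintype.card_fin]
  have hNB : ∀ w ∈ B, G.neighborFinset w = (univ.erase u).erase w := by
    intro w hw
    have hwu : w ≠ u := fun h => huB (h ▸ hw)
    apply Finset.eq_of_subset_of_card_le
    · intro z hz
      rw [SimpleGraph.mem_neighborFinset] at hz
      refine Finset.mem_erase.mpr ⟨hz.ne', Finset.mem_erase.mpr ⟨?_, Finset.mem_univ z⟩⟩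
      intro hzu
      subst hzu
      exact hnoedge _ huA w hw hz.symm
    · rw [← hnf w, hdegB w hw, Finset.card_erase_of_mem, Finset.card_erase_of_mem (Finset.mem_univ u),
        Finset.card_univ, Fintype.card_fin]
      · omega
      · exact Finset.mem_erase.mpr ⟨hwu, Finset.mem_univ w⟩
  set c : Fin n → Fin 3 := fun v => if v ∈ S then 1 else if v = u then 0 else 2 with hc
  have hcval : ∀ v, (c v = 0 ↔ v = u) ∧ (c v = 1 ↔ v ∈ S) ∧ (c v = 2 ↔ (v ∉ S ∧ v ≠ u)) := by
    intro v
    by_cases hv : v ∈ S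
    · have hvu : v ≠ u := fun h => huS (h ▸ hv)
      simp [hc, hv, hvu]
    · by_cases hvu : v = u
      · simp [hc, hv, hvu, huS]
      · simp [hc, hv, hvu]
  refine ⟨c, ?_, ?_, ?_⟩
  · intro x y
    rcases hpart x with hxS | hxA | hxB
    · rw [← SimpleGraph.mem_neighborFinset, hNS x hxS, Finset.mem_erase]
      have h1 : c x = 1 := ((hcval x).2.1).mpr hxS
      rw [h1]
      unfold pOK
      constructor
      · rintro ⟨hyx, -⟩
        exact ⟨Ne.symm hyx, fun h => absurd h.1 (by decide), fun h => absurd h.1 (by decide)⟩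
      · rintro ⟨hxy, -⟩
        exact ⟨Ne.symm hxy, Finset.mem_univ y⟩
    · have hxu : x = u := by rwa [hAu, Finset.mem_singleton] at hxA
      subst hxu
      rw [← SimpleGraph.mem_neighborFinset, hNu]
      have h0 : c x = 0 := ((hcval x).1).mpr rfl
      rw [h0]
      unfold pOK
      constructor
      · intro hyS
        have hyu : x ≠ y := fun h => huS ((h.symm ▸ hyS : x ∈ S))
        have hy1 : c y = 1 := ((hcval y).2.1).mpr hyS
        rw [hy1]
        exact ⟨hyu, fun h => absurd h.2 (by decide), fun h => absurd h.1 (by decide)⟩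
      · rintro ⟨huy, hp1, hp2⟩
        by_contra hyS
        by_cases hyu : y = x
        · exact huy hyu.symm
        · exact hp1 ⟨rfl, ((hcval y).2.2).mpr ⟨hyS, hyu⟩⟩
    · have hxu : x ≠ u := fun h => huB (h ▸ hxB)
      have hxS' : x ∉ S := fun h => Finset.disjoint_left.mp hSB h hxB
      have h2 : c x = 2 := ((hcval x).2.2).mpr ⟨hxS', hxu⟩
      rw [← SimpleGraph.mem_neighborFinset, hNB x hxB, Finset.mem_erase, Finset.mem_erase, h2]
      unfold pOK
      constructor
      · rintro ⟨hyx, hyu, -⟩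
        refine ⟨Ne.symm hyx, fun h => absurd h.1 (by decide), fun h => ?_⟩
        exact hyu (((hcval y).1).mp h.2)
      · rintro ⟨hxy, -, hp2⟩
        refine ⟨Ne.symm hxy, ?_, Finset.mem_univ y⟩
        intro hyu0
        exact hp2 ⟨rfl, ((hcval y).1).mpr hyu0⟩
  · rw [show univ.filter (fun x => c x = 0) = {u} by
      ext v
      simp only [Finset.mem_filter, Finset.mem_univ, true_and, Finset.mem_singleton]
      exact (hcval v).1]
    exact Finset.card_singleton u
  · rw [show univ.filter (fun x => c x = 1) = S by
      ext v
      simp only [Finset.mem_filter, Finset.mem_univ, true_and]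
      exact (hcval v).2.1]

theorem stmt1 (n k : ℕ) (hn : 3 ≤ n) (hk1 : 1 ≤ k) (hk2 : k ≤ n - 1)
    (G : SimpleGraph (Fin n)) (hG : G.Connected) (hκ : VertexConnAtMost G k) :
    mZ2 G ≤ k ^ k * (n - 1) ^ (k * (n - 1)) * (n - 2) ^ ((n - 2) * (n - k - 1)) ∧
      (mZ2 G = k ^ k * (n - 1) ^ (k * (n - 1)) * (n - 2) ^ ((n - 2) * (n - k - 1)) ↔
        Nonempty (G ≃g KnK n k)) := by
  classical
  have hRHSf : k ^ k * (n-1) ^ (k * (n-1)) * (n-2) ^ ((n-2) * (n - k - 1)) = fval n k := by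
    rw [fval, Nat.mul_comm k (n-1)]
  have hmzKnK : mZ2 (KnK n k) = fval n k := by
    rw [mZ2_of_pattern hn hk2 (fun x y => KnK_adj x y) (KnK_fiber0 (by omega))
      (KnK_fiber1 (by omega) hk2), fval]
  rcases hκ with ⟨S, hSk, hcut⟩ | ⟨htop, hck⟩
  swap
  · -- complete graph case
    subst htop
    have hkn : k = n - 1 := le_antisymm hk2 (by simpa using hck)
    subst hkn
    set c : Fin n → Fin 3 := fun x => if x.val = 0 then 0 else 1 with hc
    have hc2 : ∀ z, c z ≠ 2 := by
      intro z
      simp only [hc]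
      split_ifs <;> decide
    have hadjT : ∀ x y : Fin n, (⊤ : SimpleGraph (Fin n)).Adj x y ↔ x ≠ y ∧ pOK (c x) (c y) := by
      intro x y
      simp only [SimpleGraph.top_adj]
      exact ⟨fun h => ⟨h, fun hh => hc2 y hh.2, fun hh => hc2 x hh.1⟩, fun h => h.1⟩
    have hf0 : (univ.filter (fun x => c x = 0)).card = 1 := by
      have he : (univ.filter (fun x => c x = 0)) = univ.filter (fun x : Fin n => x.val = 0) := by
        apply Finset.filter_congr
        intro x _
        by_cases h : x.val = 0 <;> simp [hc, h]
      rw [he]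
      exact (card_filter_val _).trans (range_filter_eq_zero n (by omega))
    have hf1 : (univ.filter (fun x => c x = 1)).card = n - 1 := by
      have hsum := fiber_card c
      have hf2 : (univ.filter (fun x => c x = 2)).card = 0 := by
        rw [Finset.card_eq_zero, Finset.filter_eq_empty_iff]
        exact fun x _ => hc2 x
      omega
    have hmz := mZ2_of_pattern hn (le_refl (n-1)) hadjT hf0 hf1
    have hiso : Nonempty ((⊤ : SimpleGraph (Fin n)) ≃g KnK n (n-1)) := by
      apply iso_of_pattern hadjT (fun x y => KnK_adj x y)
      have hsc := fiber_card c
      have hsK := fiber_card (cKnK n (n-1))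
      have k0 := KnK_fiber0 (n := n) (k := n-1) (by omega)
      have k1 := KnK_fiber1 (n := n) (k := n-1) (by omega) (le_refl _)
      intro i
      rcases fin3_cases i with rfl | rfl | rfl
      · rw [hf0, k0]
      · rw [hf1, k1]
      · omega
    have heqq : mZ2 (⊤ : SimpleGraph (Fin n))
        = (n-1) ^ (n-1) * (n - 1) ^ ((n-1) * (n - 1)) * (n - 2) ^ ((n - 2) * (n - (n-1) - 1)) := hmz
    have heqq2 : mZ2 (⊤ : SimpleGraph (Fin n))
        = (n-1) ^ (n-1) * (n - 1) ^ ((n-1) * (n - 1)) * (n - 2) ^ ((n - 2) * (n - (n-1) - 1)) →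
        True := fun _ => trivial
    rw [hRHSf]
    have hfv : mZ2 (⊤ : SimpleGraph (Fin n)) = fval n (n-1) := by rw [fval]; exact hmz
    exact ⟨le_of_eq hfv, iff_of_true hfv hiso⟩
  · -- cut case
    obtain ⟨hTne, hTnc⟩ := hcut
    set T : Set (Fin n) := (↑S : Set (Fin n))ᶜ with hT
    have hS1 : 1 ≤ S.card := by
      rcases Nat.eq_zero_or_pos S.card with h0 | h
      · exfalso
        apply hTnc
        have hTu : T = Set.univ := by
          rw [hT, Finset.card_eq_zero.mp h0]
          simp
        rw [hTu]
        exact (SimpleGraph.induceUnivIso G).connected_iff.mpr hG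
      · exact h
    haveI : Nonempty T := hTne.to_subtype
    have hpre : ¬ (G.induce T).Preconnected := by
      intro hp
      exact hTnc ⟨hp⟩
    rw [SimpleGraph.Preconnected] at hpre
    push_neg at hpre
    obtain ⟨x, y, hxy⟩ := hpre
    set A : Finset (Fin n) := univ.filter
      (fun v => ∃ h : v ∈ T, (G.induce T).Reachable x ⟨v, h⟩) with hA
    set B : Finset (Fin n) := univ.filter
      (fun v => ∃ h : v ∈ T, ¬ (G.induce T).Reachable x ⟨v, h⟩) with hB
    have hAT : ∀ v ∈ A, v ∈ T := by
      intro v hv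
      obtain ⟨h, -⟩ := (Finset.mem_filter.mp hv).2
      exact h
    have hBT : ∀ v ∈ B, v ∈ T := by
      intro v hv
      obtain ⟨h, -⟩ := (Finset.mem_filter.mp hv).2
      exact h
    have hST : ∀ v, v ∈ S ↔ v ∉ T := by
      intro v
      simp [hT]
    have hSA : Disjoint S A :=
      Finset.disjoint_left.mpr fun v hvS hvA => (hST v).mp hvS (hAT v hvA)
    have hSB : Disjoint S B :=
      Finset.disjoint_left.mpr fun v hvS hvB => (hST v).mp hvS (hBT v hvB)
    have hABd : Disjoint A B := by
      rw [Finset.disjoint_left]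
      intro v hvA hvB
      obtain ⟨h1, hr⟩ := (Finset.mem_filter.mp hvA).2
      obtain ⟨h2, hnr⟩ := (Finset.mem_filter.mp hvB).2
      exact hnr hr
    have hU : S ∪ A ∪ B = univ := by
      ext v
      simp only [Finset.mem_union, Finset.mem_univ, iff_true, hA, hB, Finset.mem_filter, true_and]
      by_cases hvT : v ∈ T
      · by_cases hr : (G.induce T).Reachable x ⟨v, hvT⟩
        · exact Or.inl (Or.inr ⟨hvT, hr⟩)
        · exact Or.inr ⟨hvT, hr⟩
      · exact Or.inl (Or.inl ((hST v).mpr hvT))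
    have hxA : (x : Fin n) ∈ A := by
      rw [hA, Finset.mem_filter]
      exact ⟨Finset.mem_univ _, x.2, SimpleGraph.Reachable.refl x⟩
    have hyB : (y : Fin n) ∈ B := by
      rw [hB, Finset.mem_filter]
      exact ⟨Finset.mem_univ _, y.2, hxy⟩
    have ha1 : 1 ≤ A.card := Finset.card_pos.mpr ⟨_, hxA⟩
    have hb1 : 1 ≤ B.card := Finset.card_pos.mpr ⟨_, hyB⟩
    have hnoedge : ∀ p ∈ A, ∀ q ∈ B, ¬ G.Adj p q := by
      intro p hp q hq hadj
      obtain ⟨hpT, hpr⟩ := (Finset.mem_filter.mp hp).2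
      obtain ⟨hqT, hqr⟩ := (Finset.mem_filter.mp hq).2
      apply hqr
      apply hpr.trans
      exact SimpleGraph.Adj.reachable (by exact hadj)
    have hdisj2 : Disjoint (S ∪ A) B := Finset.disjoint_union_left.mpr ⟨hSB, hABd⟩
    have hsum : S.card + A.card + B.card = n := by
      have hcc := congrArg Finset.card hU
      rwa [Finset.card_union_of_disjoint hdisj2, Finset.card_union_of_disjoint hSA,
        Finset.card_univ, Fintype.card_fin] at hcc
    set cap : Fin n → ℕ := fun v => if v ∈ S then n - 1 else if v ∈ A then S.card + A.card - 1
      else S.card + B.card - 1 with hcap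
    have hpart : ∀ v : Fin n, v ∈ S ∨ v ∈ A ∨ v ∈ B := by
      intro v
      have hv : v ∈ S ∪ A ∪ B := hU ▸ Finset.mem_univ v
      simp only [Finset.mem_union] at hv
      tauto
    have hnf : ∀ v, mdeg G v = (G.neighborFinset v).card := fun v => mdeg_eq_degree G v
    have hcapv : ∀ v, mdeg G v ≤ cap v := by
      intro v
      by_cases hvS : v ∈ S
      · have hcv : cap v = n - 1 := by simp [hcap, hvS]
        rw [hcv, mdeg_eq_degree]
        have hlt := G.degree_lt_card_verts v
        rw [Fintype.card_fin] at hlt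
        omega
      · by_cases hvA : v ∈ A
        · have hcv : cap v = S.card + A.card - 1 := by simp [hcap, hvS, hvA]
          rw [hcv, hnf v]
          have hsub : G.neighborFinset v ⊆ (S ∪ A).erase v := by
            intro z hz
            rw [SimpleGraph.mem_neighborFinset] at hz
            refine Finset.mem_erase.mpr ⟨hz.ne', ?_⟩
            rcases hpart z with h | h | h
            · exact Finset.mem_union_left _ h
            · exact Finset.mem_union_right _ h
            · exact absurd hz (hnoedge v hvA z h)
          calc (G.neighborFinset v).card ≤ ((S ∪ A).erase v).card := Finset.card_le_card hsub
          _ = (S ∪ A).card - 1 := Finset.card_erase_of_mem (Finset.mem_union_right _ hvA)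
          _ = S.card + A.card - 1 := by rw [Finset.card_union_of_disjoint hSA]
        · have hvB : v ∈ B := by
            rcases hpart v with h | h | h
            · exact absurd h hvS
            · exact absurd h hvA
            · exact h
          have hcv : cap v = S.card + B.card - 1 := by simp [hcap, hvS, hvA]
          rw [hcv, hnf v]
          have hsub : G.neighborFinset v ⊆ (S ∪ B).erase v := by
            intro z hz
            rw [SimpleGraph.mem_neighborFinset] at hz
            refine Finset.mem_erase.mpr ⟨hz.ne', ?_⟩
            rcases hpart z with h | h | h
            · exact Finset.mem_union_left _ h
            · exact absurd hz.symm (hnoedge z h v hvB)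
            · exact Finset.mem_union_right _ h
          calc (G.neighborFinset v).card ≤ ((S ∪ B).erase v).card := Finset.card_le_card hsub
          _ = (S ∪ B).card - 1 := Finset.card_erase_of_mem (Finset.mem_union_right _ hvB)
          _ = S.card + B.card - 1 := by rw [Finset.card_union_of_disjoint hSB]
    have hcap1 : ∀ v, 1 ≤ cap v := by
      intro v
      simp only [hcap]
      split_ifs <;> omega
    have hprod : mZ2 G ≤ ∏ v : Fin n, (cap v) ^ (cap v) :=
      Finset.prod_le_prod (fun _ _ => Nat.zero_le _) (fun v _ => pow_self_mono (hcapv v))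
    have hsplit : (∏ v : Fin n, (cap v) ^ (cap v))
        = (n-1) ^ ((n-1) * S.card)
          * (S.card + A.card - 1) ^ ((S.card + A.card - 1) * A.card)
          * (S.card + B.card - 1) ^ ((S.card + B.card - 1) * B.card) := by
      have hcS : ∀ v ∈ S, (cap v) ^ (cap v) = (n-1) ^ (n-1) := by
        intro v hv
        have : cap v = n - 1 := by simp [hcap, hv]
        rw [this]
      have hcA : ∀ v ∈ A, (cap v) ^ (cap v) = (S.card + A.card - 1) ^ (S.card + A.card - 1) := by
        intro v hv
        have hvS : v ∉ S := fun h => Finset.disjoint_left.mp hSA h hv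
        have : cap v = S.card + A.card - 1 := by simp [hcap, hvS, hv]
        rw [this]
      have hcB : ∀ v ∈ B, (cap v) ^ (cap v) = (S.card + B.card - 1) ^ (S.card + B.card - 1) := by
        intro v hv
        have hvS : v ∉ S := fun h => Finset.disjoint_left.mp hSB h hv
        have hvA : v ∉ A := fun h => Finset.disjoint_left.mp hABd h hv
        have : cap v = S.card + B.card - 1 := by simp [hcap, hvS, hvA]
        rw [this]
      calc (∏ v : Fin n, (cap v) ^ (cap v)) = ∏ v ∈ S ∪ A ∪ B, (cap v) ^ (cap v) := by rw [hU]
      _ = (∏ v ∈ S ∪ A, (cap v) ^ (cap v)) * ∏ v ∈ B, (cap v) ^ (cap v) :=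
          Finset.prod_union hdisj2
      _ = ((∏ v ∈ S, (cap v) ^ (cap v)) * ∏ v ∈ A, (cap v) ^ (cap v))
            * ∏ v ∈ B, (cap v) ^ (cap v) := by rw [Finset.prod_union hSA]
      _ = (n-1) ^ ((n-1) * S.card)
          * (S.card + A.card - 1) ^ ((S.card + A.card - 1) * A.card)
          * (S.card + B.card - 1) ^ ((S.card + B.card - 1) * B.card) := by
          rw [Finset.prod_congr rfl hcS, Finset.prod_congr rfl hcA, Finset.prod_congr rfl hcB,
            Finset.prod_const, Finset.prod_const, Finset.prod_const,
            ← pow_mul, ← pow_mul, ← pow_mul]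
    have hP := Pkey n k S.card A.card B.card hS1 ha1 hb1 hsum hSk hk2
    have hle : mZ2 G ≤ fval n k := le_trans hprod (le_trans (le_of_eq hsplit) hP.1)
    rw [hRHSf]
    refine ⟨hle, ?_, ?_⟩
    · -- equality implies isomorphic to KnK
      intro heq
      have h1 : (∏ v : Fin n, (cap v) ^ (cap v)) = fval n k :=
        le_antisymm (le_trans (le_of_eq hsplit) hP.1) (heq ▸ hprod)
      have h2 : (∏ v : Fin n, (mdeg G v) ^ (mdeg G v)) = ∏ v : Fin n, (cap v) ^ (cap v) :=
        heq.trans h1.symm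
      obtain ⟨hsk, hab⟩ := hP.2 (by rw [← hsplit]; exact h1)
      have hterm := prod_eq_forall
        (fun v _ => pow_pos (mdeg_pos hG (by omega) v) _)
        (fun v _ => pow_self_mono (hcapv v)) h2
      have hdegall : ∀ v, mdeg G v = cap v := fun v =>
        pow_self_inj (mdeg_pos hG (by omega) v) (hcap1 v) (hterm v (Finset.mem_univ v))
      have hdS : ∀ v ∈ S, mdeg G v = n - 1 := by
        intro v hv
        rw [hdegall v]
        simp [hcap, hv]
      rcases hab with hA1 | hB1
      · have hdA : ∀ v ∈ A, mdeg G v = S.card := by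
          intro v hv
          have hvS : v ∉ S := fun h => Finset.disjoint_left.mp hSA h hv
          rw [hdegall v]
          have : cap v = S.card + A.card - 1 := by simp [hcap, hvS, hv]
          rw [this]
          omega
        have hdB : ∀ v ∈ B, mdeg G v = n - 2 := by
          intro v hv
          have hvS : v ∉ S := fun h => Finset.disjoint_left.mp hSB h hv
          have hvA : v ∉ A := fun h => Finset.disjoint_left.mp hABd h hv
          rw [hdegall v]
          have : cap v = S.card + B.card - 1 := by simp [hcap, hvS, hvA]
          rw [this]
          omega
        obtain ⟨cc, hccadj, hcc0, hcc1⟩ :=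
          pattern_of_extremal hn S A B hSA hSB hABd hU hnoedge hA1 hdS hdA hdB
        apply iso_of_pattern hccadj (fun x y => KnK_adj x y)
        have hsc := fiber_card cc
        have hsK := fiber_card (cKnK n k)
        have k0 := KnK_fiber0 (n := n) (k := k) (by omega)
        have k1 := KnK_fiber1 (n := n) (k := k) (by omega) hk2
        intro i
        rcases fin3_cases i with rfl | rfl | rfl
        · rw [hcc0, k0]
        · rw [hcc1, k1, hsk]
        · omega
      · have hU' : S ∪ B ∪ A = univ := by rw [Finset.union_right_comm]; exact hU
        have hnoedge' : ∀ p ∈ B, ∀ q ∈ A, ¬ G.Adj p q :=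
          fun p hp q hq hadj => hnoedge q hq p hp hadj.symm
        have hdB' : ∀ v ∈ B, mdeg G v = S.card := by
          intro v hv
          have hvS : v ∉ S := fun h => Finset.disjoint_left.mp hSB h hv
          have hvA : v ∉ A := fun h => Finset.disjoint_left.mp hABd h hv
          rw [hdegall v]
          have : cap v = S.card + B.card - 1 := by simp [hcap, hvS, hvA]
          rw [this]
          omega
        have hdA' : ∀ v ∈ A, mdeg G v = n - 2 := by
          intro v hv
          have hvS : v ∉ S := fun h => Finset.disjoint_left.mp hSA h hv
          rw [hdegall v]
          have : cap v = S.card + A.card - 1 := by simp [hcap, hvS, hv]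
          rw [this]
          omega
        obtain ⟨cc, hccadj, hcc0, hcc1⟩ :=
          pattern_of_extremal hn S B A hSB hSA hABd.symm hU' hnoedge' hB1 hdS hdB' hdA'
        apply iso_of_pattern hccadj (fun x y => KnK_adj x y)
        have hsc := fiber_card cc
        have hsK := fiber_card (cKnK n k)
        have k0 := KnK_fiber0 (n := n) (k := k) (by omega)
        have k1 := KnK_fiber1 (n := n) (k := k) (by omega) hk2
        intro i
        rcases fin3_cases i with rfl | rfl | rfl
        · rw [hcc0, k0]
        · rw [hcc1, k1, hsk]
        · omega
    · rintro ⟨e⟩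
      rw [mZ2_iso e, hmzKnK]
end

section
/- Let n ≥ 3 and 1 ≤ k ≤ n−1 be integers, and let G be a simple connected graph on n vertices with edge connectivity κ′(G) ≤ k. Then Π1(G) ≤ k^2 · (n−1)^{2k} · (n−2)^{2(n−k−1)}, with equality if and only if G is isomorphic to K_n^k. -/
open SimpleGraph Finset

/-- The edge connectivity of `G` is at most `k`: some set of at most `k` edges of `G`
disconnects it. -/
def EdgeConnAtMost {V : Type*} (G : SimpleGraph V) (k : ℕ) : Prop :=
  ∃ F : Finset (Sym2 V), (↑F : Set (Sym2 V)) ⊆ G.edgeSet ∧ F.card ≤ k ∧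
    ¬ (G.deleteEdges (↑F : Set (Sym2 V))).Connected

/-!
Cut `G` along at most `k` edges into sides `X`, `Y` with `|X| = a + 1 ≤ |Y| = b + 1`, and let
`c u` count the cut edges at `u`, so that `∑_X c = ∑_Y c = m ≤ k`. Then `d(u) ≤ a + c u` on `X`
and `d(u) ≤ b + c u` on `Y`; put `M = a + b = n - 2`.

On `Y`, Bernoulli's inequality `1 + c/M ≤ (1 + 1/M)^c` gives
`∏_Y (b + c u) ≤ M^(b+1) (1 + 1/M)^m`, strictly if `a > 0`. On `X`, let `i` carry the most cut
edges. Any other vertex touching the cut carries at most half of `m ≤ M + 1` edges, so its factor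
is at most `M`; a cut-free vertex has factor `a ≤ M/2`; and `a + c i ≤ m + q`, where `q` counts the
cut-free vertices. As `m + q ≤ m 2^q`, this gives `∏_X (a + c u) ≤ m M^a`.

Together, `∏ d(u) ≤ m (n-1)^m (n-2)^(n-1-m)`, which is strictly increasing in `m ≤ n - 1`.
Equality forces `a = 0`, `m = k` and `Y` to be a clique, so `G` is `K_(n-1)` plus a vertex of
degree `k`, and any two such graphs are isomorphic.
-/

/-- `∏ d(v)` over `K_n^k`: one vertex of degree `k`, `k` of degree `n - 1`, the rest of
degree `n - 2`. -/
def coneDegreeProd (n k : ℕ) : ℕ := k * (n - 1) ^ k * (n - 2) ^ (n - 1 - k)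

lemma coneDegreeProd_strictMonoOn {n : ℕ} (hn : 3 ≤ n) :
    StrictMonoOn (coneDegreeProd n) (Set.Iic (n - 1)) := by
  refine strictMonoOn_Iic_of_lt_succ fun j hj => ?_
  obtain ⟨r, hr, hr'⟩ : ∃ r, n - 1 - j = r + 1 ∧ n - 1 - (j + 1) = r :=
    ⟨n - 2 - j, by omega, by omega⟩
  simp only [coneDegreeProd, Order.succ_eq_add_one, hr, hr']
  have hpos : 0 < (n - 1) ^ j * (n - 2) ^ r :=
    Nat.mul_pos (Nat.pow_pos (by omega)) (Nat.pow_pos (by omega))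
  calc j * (n - 1) ^ j * (n - 2) ^ (r + 1)
        = j * (n - 2) * ((n - 1) ^ j * (n - 2) ^ r) := by ring
    _ < (j + 1) * (n - 1) * ((n - 1) ^ j * (n - 2) ^ r) :=
      Nat.mul_lt_mul_of_pos_right
        (Nat.mul_lt_mul_of_le_of_lt (Nat.le_succ j) (by omega) j.succ_pos) hpos
    _ = (j + 1) * (n - 1) ^ (j + 1) * (n - 2) ^ r := by ring

lemma add_mul_pow_le_mul_succ_pow (M d : ℕ) : (M + d) * M ^ d ≤ M * (M + 1) ^ d := by
  induction d with
  | zero => simp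
  | succ d ih =>
    have : M ^ d ≤ (M + 1) ^ d := Nat.pow_le_pow_left (Nat.le_succ M) d
    calc (M + (d + 1)) * M ^ (d + 1) = M * ((M + d) * M ^ d) + M * M ^ d := by ring
      _ ≤ M * (M * (M + 1) ^ d) + M * (M + 1) ^ d := by gcongr
      _ = M * (M + 1) ^ (d + 1) := by ring

lemma prod_add_mul_pow_sum_le {ι : Type*} (Y : Finset ι) (c : ι → ℕ) {B M : ℕ} (hB : B ≤ M) :
    (∏ u ∈ Y, (B + c u)) * M ^ ∑ u ∈ Y, c u ≤ M ^ #Y * (M + 1) ^ ∑ u ∈ Y, c u := by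
  rw [← prod_pow_eq_pow_sum, ← prod_pow_eq_pow_sum, ← prod_mul_distrib, pow_card_mul_prod]
  refine prod_le_prod' fun u _ => ?_
  calc (B + c u) * M ^ c u ≤ (M + c u) * M ^ c u := by gcongr
    _ ≤ M * (M + 1) ^ c u := add_mul_pow_le_mul_succ_pow M (c u)

lemma prod_add_mul_pow_sum_lt {ι : Type*} {Y : Finset ι} (hY : Y.Nonempty) (c : ι → ℕ) {B M : ℕ}
    (hB₀ : 0 < B) (hB : B < M) :
    (∏ u ∈ Y, (B + c u)) * M ^ ∑ u ∈ Y, c u < M ^ #Y * (M + 1) ^ ∑ u ∈ Y, c u := by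
  rw [← prod_pow_eq_pow_sum, ← prod_pow_eq_pow_sum, ← prod_mul_distrib, pow_card_mul_prod]
  refine prod_lt_prod_of_nonempty (fun u _ => Nat.mul_pos (by omega) (Nat.pow_pos (by omega)))
    (fun u _ => ?_) hY
  calc (B + c u) * M ^ c u < (M + c u) * M ^ c u :=
      Nat.mul_lt_mul_of_pos_right (by omega) (Nat.pow_pos (by omega))
    _ ≤ M * (M + 1) ^ c u := add_mul_pow_le_mul_succ_pow M (c u)

lemma add_mul_pow_le_mul_pow {A M c₀ m p q : ℕ} (hpq : p + q = A) (hp : p + c₀ ≤ m)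
    (hm : 1 ≤ m) (hM : 2 * A ≤ M) :
    (A + c₀) * (M ^ p * A ^ q) ≤ m * M ^ A := by
  have hq : A + c₀ ≤ m * 2 ^ q := by
    have : q + 1 ≤ 2 ^ q := Nat.lt_two_pow_self
    nlinarith
  calc (A + c₀) * (M ^ p * A ^ q) ≤ m * 2 ^ q * (M ^ p * A ^ q) := by gcongr
    _ = m * M ^ p * (2 * A) ^ q := by ring
    _ ≤ m * M ^ p * M ^ q := by gcongr
    _ = m * M ^ A := by rw [mul_assoc, ← pow_add, hpq]

lemma prod_add_le_sum_mul_pow {ι : Type*} [DecidableEq ι] {X : Finset ι} {c : ι → ℕ} {A M : ℕ}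
    (hX : #X = A + 1) (hM : 2 * A ≤ M) (hc : 1 ≤ ∑ u ∈ X, c u)
    (hcM : ∑ u ∈ X, c u ≤ M + 1) :
    ∏ u ∈ X, (A + c u) ≤ (∑ u ∈ X, c u) * M ^ A := by
  set m := ∑ u ∈ X, c u
  obtain ⟨i, hi, hmax⟩ := X.exists_max_image c (card_pos.mp (by omega))
  set X' := X.erase i
  have hsum : c i + ∑ u ∈ X', c u = m := add_sum_erase X c hi
  set p := #{u ∈ X' | ¬c u = 0}
  set q := #{u ∈ X' | c u = 0}
  have hpq : p + q = A := by
    have := card_filter_add_card_filter_not (s := X') (fun u => c u = 0)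
    rw [card_erase_of_mem hi, hX] at this
    simp only [p, q]; omega
  have hp : p ≤ ∑ u ∈ X', c u := by
    calc p = ∑ u ∈ X' with ¬c u = 0, 1 := by simp [p]
      _ ≤ ∑ u ∈ X' with ¬c u = 0, c u := sum_le_sum fun u hu => by
          have := (mem_filter.mp hu).2; omega
      _ ≤ ∑ u ∈ X', c u := sum_le_sum_of_subset (filter_subset _ _)
  -- `u ≠ i` shares `m ≤ M + 1` with `i` and `c u ≤ c i`, so `2 c u ≤ M + 1`, whence `A + c u ≤ M`
  have hbound : ∀ u ∈ X', A + c u ≤ if c u = 0 then A else M := by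
    intro u hu
    split_ifs with h
    · omega
    · have : c u ≤ ∑ v ∈ X', c v := single_le_sum (fun _ _ => Nat.zero_le _) hu
      have := hmax u (mem_of_mem_erase hu)
      omega
  have hX' : ∏ u ∈ X', (A + c u) ≤ M ^ p * A ^ q := by
    calc ∏ u ∈ X', (A + c u) ≤ ∏ u ∈ X', (if c u = 0 then A else M) := prod_le_prod' hbound
      _ = M ^ p * A ^ q := by rw [prod_ite, prod_const, prod_const, mul_comm]
  calc ∏ u ∈ X, (A + c u) = (A + c i) * ∏ u ∈ X', (A + c u) := (mul_prod_erase X _ hi).symm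
    _ ≤ (A + c i) * (M ^ p * A ^ q) := by gcongr
    _ ≤ m * M ^ A := add_mul_pow_le_mul_pow hpq (by omega) hc hM

lemma coneDegreeProd_mul_pow {M m : ℕ} (hm : m ≤ M + 1) :
    coneDegreeProd (M + 2) m * M ^ m = m * (M + 1) ^ m * M ^ (M + 1) := by
  rw [coneDegreeProd, show M + 2 - 1 = M + 1 by omega, show M + 2 - 2 = M by omega, mul_assoc,
    ← pow_add, Nat.sub_add_cancel hm]

lemma prod_cut_le_coneDegreeProd_sum {ι : Type*} [DecidableEq ι] {X Y : Finset ι} {c d : ι → ℕ}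
    {A B : ℕ} (hX : #X = A + 1) (hY : #Y = B + 1) (hAB : A ≤ B) (hB : 0 < B)
    (hcd : ∑ u ∈ Y, d u = ∑ u ∈ X, c u) (hc : 1 ≤ ∑ u ∈ X, c u)
    (hcB : ∑ u ∈ X, c u ≤ A + B + 1) :
    (∏ u ∈ X, (A + c u)) * ∏ u ∈ Y, (B + d u) ≤ coneDegreeProd (A + B + 2) (∑ u ∈ X, c u) ∧
      (0 < A → (∏ u ∈ X, (A + c u)) * ∏ u ∈ Y, (B + d u) <
        coneDegreeProd (A + B + 2) (∑ u ∈ X, c u)) := by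
  set m := ∑ u ∈ X, c u
  set M := A + B
  set PX := ∏ u ∈ X, (A + c u)
  set PY := ∏ u ∈ Y, (B + d u)
  have hMpow : 0 < M ^ m := Nat.pow_pos (by omega)
  have hsplit : PX * PY * M ^ m = PX * (PY * M ^ ∑ u ∈ Y, d u) := by rw [hcd, mul_assoc]
  have hXb : PX * (M ^ #Y * (M + 1) ^ ∑ u ∈ Y, d u) ≤ coneDegreeProd (M + 2) m * M ^ m := by
    calc PX * (M ^ #Y * (M + 1) ^ ∑ u ∈ Y, d u) ≤ m * M ^ A * (M ^ (B + 1) * (M + 1) ^ m) := by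
          rw [hcd, hY]
          exact Nat.mul_le_mul_right _ (prod_add_le_sum_mul_pow hX (by omega) hc hcB)
      _ = coneDegreeProd (M + 2) m * M ^ m := by
          rw [coneDegreeProd_mul_pow hcB, show M + 1 = A + (B + 1) by omega, pow_add]
          ring
  refine ⟨Nat.le_of_mul_le_mul_right ?_ hMpow,
    fun hA => Nat.lt_of_mul_lt_mul_right (a := M ^ m) ?_⟩
  · exact hsplit ▸ (Nat.mul_le_mul_left _ (prod_add_mul_pow_sum_le Y d (by omega))).trans hXb
  · have hPX : 0 < PX := prod_pos fun u _ => by omega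
    exact hsplit ▸ (Nat.mul_lt_mul_of_pos_left
      (prod_add_mul_pow_sum_lt (card_pos.mp (by omega)) d hB (by omega)) hPX).trans_le hXb

lemma prod_cut_le_coneDegreeProd {ι : Type*} [DecidableEq ι] {X Y : Finset ι} {c d : ι → ℕ}
    {A B k : ℕ} (hX : #X = A + 1) (hY : #Y = B + 1) (hAB : A ≤ B) (hB : 0 < B)
    (hcd : ∑ u ∈ Y, d u = ∑ u ∈ X, c u) (hc : 1 ≤ ∑ u ∈ X, c u) (hck : ∑ u ∈ X, c u ≤ k)
    (hk : k ≤ A + B + 1) :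
    (∏ u ∈ X, (A + c u)) * ∏ u ∈ Y, (B + d u) ≤ coneDegreeProd (A + B + 2) k ∧
      ((∏ u ∈ X, (A + c u)) * ∏ u ∈ Y, (B + d u) = coneDegreeProd (A + B + 2) k →
        A = 0 ∧ ∑ u ∈ X, c u = k) := by
  obtain ⟨hle, hlt⟩ := prod_cut_le_coneDegreeProd_sum hX hY hAB hB hcd hc (hck.trans hk)
  have hmono := coneDegreeProd_strictMonoOn (n := A + B + 2) (by omega)
  have hm_mem : ∑ u ∈ X, c u ∈ Set.Iic (A + B + 2 - 1) := Set.mem_Iic.mpr (by omega)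
  have hk_mem : k ∈ Set.Iic (A + B + 2 - 1) := Set.mem_Iic.mpr (by omega)
  have hmk := hmono.monotoneOn hm_mem hk_mem hck
  refine ⟨hle.trans hmk, fun hextremal => ⟨?_, ?_⟩⟩
  · by_contra hA
    have := hlt (Nat.pos_of_ne_zero hA)
    omega
  · by_contra hne
    have := hmono hm_mem hk_mem (hck.lt_of_ne hne)
    omega

namespace SimpleGraph

variable {V : Type*} {G : SimpleGraph V}

lemma adj_iff_ne_of_isClique_compl_singleton {x : V} (hG : G.IsClique ({x}ᶜ : Set V)) {u v : V}
    (hu : u ≠ x) (hv : v ≠ x) : G.Adj u v ↔ u ≠ v :=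
  ⟨Adj.ne, hG hu hv⟩

section

variable [DecidableRel G.Adj]

lemma card_interedges_comm (s t : Finset V) : #(G.interedges s t) = #(G.interedges t s) :=
  haveI : Std.Symm G.Adj := ⟨fun _ _ h => h.symm⟩
  Rel.card_interedges_comm _ _

lemma sum_card_filter_adj (s t : Finset V) :
    ∑ u ∈ s, #{v ∈ t | G.Adj u v} = #(G.interedges s t) := by
  rw [interedges_def, card_filter, sum_product]
  simp only [card_filter]

lemma filter_adj_subset_erase [DecidableEq V] (s : Finset V) (u : V) :
    {v ∈ s | G.Adj u v} ⊆ s.erase u :=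
  fun _ hv => mem_erase.mpr ⟨(mem_filter.mp hv).2.ne', (mem_filter.mp hv).1⟩

variable [Fintype V]

lemma card_subtype_adj (x : V) : Fintype.card {v // G.Adj x v} = G.degree x := by
  rw [Fintype.card_subtype, ← neighborFinset_eq_filter, card_neighborFinset_eq_degree]

variable [DecidableEq V]

lemma card_interedges_compl_pos (hG : G.Preconnected) {s : Finset V} (hs : s.Nonempty)
    (hs' : sᶜ.Nonempty) : 0 < #(G.interedges s sᶜ) := by
  obtain ⟨u, hu⟩ := hs
  obtain ⟨v, hv⟩ := hs'
  obtain ⟨d, -, hd, hd'⟩ := (hG u v).some.exists_boundary_dart (s : Set V) hu (by simpa using hv)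
  exact card_pos.mpr ⟨(d.fst, d.snd), G.mk_mem_interedges_iff.mpr ⟨hd, by simpa using hd', d.adj⟩⟩

lemma exists_cut_of_not_connected_deleteEdges (hG : G.Connected) {F : Finset (Sym2 V)}
    (hF : ¬(G.deleteEdges ↑F).Connected) :
    ∃ s : Finset V, s.Nonempty ∧ sᶜ.Nonempty ∧ #(G.interedges s sᶜ) ≤ #F := by
  classical
  obtain ⟨v, w, hvw⟩ : ∃ v w, ¬(G.deleteEdges ↑F).Reachable v w := by
    by_contra! h
    exact hF ((connected_iff _).mpr ⟨h, hG.nonempty⟩)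
  set s : Finset V := {u | (G.deleteEdges ↑F).Reachable v u}
  refine ⟨s, ⟨v, by simp [s]⟩, ⟨w, by simpa [s] using hvw⟩, ?_⟩
  refine card_le_card_of_injOn (fun e => s(e.1, e.2)) (fun e he => ?_) (fun e he e' he' h => ?_)
  · obtain ⟨he₁, he₂, hadj⟩ := G.mem_interedges_iff.mp he
    by_contra hF'
    simp only [s, mem_compl, mem_filter, mem_univ, true_and] at he₁ he₂
    exact he₂ (he₁.trans (deleteEdges_adj.mpr ⟨hadj, hF'⟩).reachable)
  · obtain ⟨he₁, he₂, -⟩ := G.mem_interedges_iff.mp he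
    obtain ⟨he₁', he₂', -⟩ := G.mem_interedges_iff.mp he'
    rcases Sym2.eq_iff.mp h with ⟨h₁, h₂⟩ | ⟨h₁, -⟩
    · exact Prod.ext h₁ h₂
    · exact absurd (h₁ ▸ he₁) (mem_compl.mp he₂')

lemma exists_small_cut (hG : G.Connected) {k : ℕ} (hk : EdgeConnAtMost G k) :
    ∃ s : Finset V, s.Nonempty ∧ sᶜ.Nonempty ∧ #s ≤ #sᶜ ∧ #(G.interedges s sᶜ) ≤ k := by
  obtain ⟨F, -, hFk, hF⟩ := hk
  obtain ⟨s, hs, hs', hsF⟩ := exists_cut_of_not_connected_deleteEdges hG hF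
  rcases le_total #s #sᶜ with h | h
  · exact ⟨s, hs, hs', h, hsF.trans hFk⟩
  · refine ⟨sᶜ, hs', by rwa [compl_compl], by rwa [compl_compl], ?_⟩
    rw [compl_compl, card_interedges_comm]
    exact hsF.trans hFk

lemma degree_eq_card_filter_adj_add (s : Finset V) (u : V) :
    G.degree u = #{v ∈ s | G.Adj u v} + #{v ∈ sᶜ | G.Adj u v} := by
  rw [← card_neighborFinset_eq_degree, neighborFinset_eq_filter, ← union_compl s, filter_union,
    card_union_of_disjoint (disjoint_filter_filter disjoint_compl_right)]

lemma degree_le_card_sub_one_add {s : Finset V} {u : V} (hu : u ∈ s) :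
    G.degree u ≤ #s - 1 + #{v ∈ sᶜ | G.Adj u v} := by
  rw [degree_eq_card_filter_adj_add s u, ← card_erase_of_mem hu]
  exact Nat.add_le_add_right (card_le_card (filter_adj_subset_erase s u)) _

lemma prod_degree_le_prod_card_sub_one_add (s : Finset V) :
    ∏ u ∈ s, G.degree u ≤ ∏ u ∈ s, (#s - 1 + #{v ∈ sᶜ | G.Adj u v}) :=
  prod_le_prod' fun _ hu => degree_le_card_sub_one_add hu

lemma adj_of_degree_eq_card_sub_one_add {s : Finset V} {u v : V} (hu : u ∈ s)
    (h : G.degree u = #s - 1 + #{v ∈ sᶜ | G.Adj u v}) (hv : v ∈ s) (huv : u ≠ v) :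
    G.Adj u v := by
  rw [degree_eq_card_filter_adj_add s u, ← card_erase_of_mem hu, Nat.add_right_cancel_iff] at h
  have := eq_of_subset_of_card_le (filter_adj_subset_erase s u) h.ge
  exact (mem_filter.mp (this ▸ mem_erase.mpr ⟨huv.symm, hv⟩)).2

lemma isClique_of_prod_degree_eq {s : Finset V} (hpos : ∀ u ∈ s, 0 < G.degree u)
    (h : ∏ u ∈ s, G.degree u = ∏ u ∈ s, (#s - 1 + #{v ∈ sᶜ | G.Adj u v})) :
    G.IsClique (s : Set V) := by
  intro u hu v hv huv
  refine adj_of_degree_eq_card_sub_one_add hu ?_ hv huv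
  by_contra hne
  exact h.not_lt (prod_lt_prod hpos (fun _ hw => degree_le_card_sub_one_add hw)
    ⟨u, hu, (degree_le_card_sub_one_add hu).lt_of_ne hne⟩)

lemma degree_of_isClique_compl_singleton {x : V} (hG : G.IsClique ({x}ᶜ : Set V)) {v : V}
    (hv : v ≠ x) :
    G.degree v = if G.Adj x v then Fintype.card V - 1 else Fintype.card V - 2 := by
  have hN : ∀ w, w ≠ x → (G.Adj v w ↔ w ≠ v) := fun w hw =>
    ⟨fun h => h.ne.symm, fun h => hG hv hw h.symm⟩
  split_ifs with h
  · exact (G.degree_eq_card_sub_one v).mpr fun w hw =>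
      if hwx : w = x then hwx ▸ h.symm else (hN w hwx).mpr hw.symm
  · have : G.neighborFinset v = (univ.erase v).erase x := by
      ext w
      by_cases hwx : w = x
      · simp [hwx, adj_comm, h]
      · simp [hwx, hN w hwx]
    rw [← card_neighborFinset_eq_degree, this, card_erase_of_mem (by simpa using hv.symm),
      card_erase_of_mem (mem_univ v), card_univ, Nat.sub_sub]

lemma prod_degree_of_isClique_compl_singleton {x : V} (hG : G.IsClique ({x}ᶜ : Set V)) :
    ∏ v, G.degree v = coneDegreeProd (Fintype.card V) (G.degree x) := by
  have hfilter : (univ.erase x).filter (G.Adj x) = G.neighborFinset x := by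
    ext v; simpa [and_iff_right_iff_imp] using fun h : G.Adj x v => h.ne.symm
  have hcompl :
      #((univ.erase x).filter (fun v => ¬G.Adj x v)) = Fintype.card V - 1 - G.degree x := by
    rw [← card_neighborFinset_eq_degree, ← hfilter, ← card_univ, ← card_erase_of_mem (mem_univ x),
      ← card_filter_add_card_filter_not (s := univ.erase x) (G.Adj x), Nat.add_sub_cancel_left]
  rw [← mul_prod_erase univ _ (mem_univ x),
    prod_congr rfl fun v hv => degree_of_isClique_compl_singleton hG (ne_of_mem_erase hv),
    prod_ite, prod_const, prod_const, hfilter, card_neighborFinset_eq_degree, hcompl,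
    coneDegreeProd, mul_assoc]

lemma nonempty_iso_of_isClique_compl_singleton {W : Type*} [Fintype W] [DecidableEq W]
    {H : SimpleGraph W} [DecidableRel H.Adj] {x : V} {y : W} (hG : G.IsClique ({x}ᶜ : Set V))
    (hH : H.IsClique ({y}ᶜ : Set W)) (hcard : Fintype.card V = Fintype.card W)
    (hdeg : G.degree x = H.degree y) : Nonempty (G ≃g H) := by
  have e₁ : {v // G.Adj x v} ≃ {w // H.Adj y w} :=
    Fintype.equivOfCardEq (by rw [card_subtype_adj, card_subtype_adj, hdeg])
  have e₂ : {v // ¬G.Adj x v} ≃ {w // ¬H.Adj y w} :=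
    Fintype.equivOfCardEq (by
      rw [Fintype.card_subtype_compl, Fintype.card_subtype_compl, card_subtype_adj,
        card_subtype_adj, hdeg, hcard])
  -- `x` and `y` are non-neighbours of themselves, so `e₂` can be corrected to send `x` to `y`
  let e₂' := e₂.trans (Equiv.swap (e₂ ⟨x, G.irrefl (v := x)⟩) ⟨y, H.irrefl (v := y)⟩)
  let σ : V ≃ W := (Equiv.sumCompl _).symm.trans ((e₁.sumCongr e₂').trans (Equiv.sumCompl _))
  have hσx : σ x = y := by
    simp [σ, e₂', Equiv.sumCompl_symm_apply_of_neg (G.irrefl (v := x))]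
  have hσ : ∀ v, H.Adj y (σ v) ↔ G.Adj x v := by
    intro v
    by_cases h : G.Adj x v
    · simpa [σ, Equiv.sumCompl_symm_apply_of_pos h, h] using (e₁ ⟨v, h⟩).2
    · simpa [σ, Equiv.sumCompl_symm_apply_of_neg h, h] using (e₂' ⟨v, h⟩).2
  refine ⟨σ, fun {u v} => ?_⟩
  by_cases hu : u = x
  · subst hu; rw [hσx, hσ]
  by_cases hv : v = x
  · subst hv; rw [hσx, adj_comm, hσ, adj_comm]
  have hne : ∀ {w}, w ≠ x → σ w ≠ y := fun hw h => hw (σ.injective (h.trans hσx.symm))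
  rw [adj_iff_ne_of_isClique_compl_singleton hH (hne hu) (hne hv),
    adj_iff_ne_of_isClique_compl_singleton hG hu hv, σ.injective.ne_iff]

lemma prod_degree_le_coneDegreeProd (hG : G.Connected) (hV : 3 ≤ Fintype.card V) {k : ℕ}
    (hk : k ≤ Fintype.card V - 1) {s : Finset V} (hs : s.Nonempty) (hs' : sᶜ.Nonempty)
    (hss' : #s ≤ #sᶜ) (hcut : #(G.interedges s sᶜ) ≤ k) :
    ∏ v, G.degree v ≤ coneDegreeProd (Fintype.card V) k ∧
      (∏ v, G.degree v = coneDegreeProd (Fintype.card V) k →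
        ∃ x, G.degree x = k ∧ G.IsClique ({x}ᶜ : Set V)) := by
  have hcard : #s + #sᶜ = Fintype.card V := card_add_card_compl s
  obtain ⟨A, hA⟩ : ∃ A, #s = A + 1 := ⟨#s - 1, by have := hs.card_pos; omega⟩
  obtain ⟨B, hB⟩ : ∃ B, #sᶜ = B + 1 := ⟨#sᶜ - 1, by have := hs'.card_pos; omega⟩
  have hsum : ∑ u ∈ s, #{v ∈ sᶜ | G.Adj u v} = #(G.interedges s sᶜ) := sum_card_filter_adj _ _
  have hsum' : ∑ u ∈ sᶜ, #{v ∈ sᶜᶜ | G.Adj u v} = #(G.interedges s sᶜ) := by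
    rw [sum_card_filter_adj, compl_compl, card_interedges_comm]
  have hm := card_interedges_compl_pos hG.preconnected hs hs'
  set PX := ∏ u ∈ s, (A + #{v ∈ sᶜ | G.Adj u v})
  set PY := ∏ u ∈ sᶜ, (B + #{v ∈ sᶜᶜ | G.Adj u v})
  obtain ⟨hle, hextremal⟩ : PX * PY ≤ coneDegreeProd (Fintype.card V) k ∧
      (PX * PY = coneDegreeProd (Fintype.card V) k → A = 0 ∧ #(G.interedges s sᶜ) = k) := by
    have := prod_cut_le_coneDegreeProd hA hB (by omega) (by omega) (hsum'.trans hsum.symm)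
      (by omega) (hsum ▸ hcut) (by omega)
    rwa [hsum, show A + B + 2 = Fintype.card V by omega] at this
  have hX : ∏ u ∈ s, G.degree u ≤ PX := by
    simpa only [hA, Nat.add_sub_cancel] using prod_degree_le_prod_card_sub_one_add (G := G) s
  have hY : ∏ u ∈ sᶜ, G.degree u ≤ PY := by
    simpa only [hB, Nat.add_sub_cancel] using prod_degree_le_prod_card_sub_one_add (G := G) sᶜ
  have hsplit := (prod_mul_prod_compl s fun u => G.degree u).symm
  have hdeg : ∏ v, G.degree v ≤ PX * PY := hsplit ▸ Nat.mul_le_mul hX hY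
  refine ⟨hdeg.trans hle, fun hGk => ?_⟩
  obtain ⟨hA0, hmk⟩ := hextremal (by omega)
  have hpos : ∀ u, 0 < G.degree u :=
    have : Nontrivial V := Fintype.one_lt_card_iff_nontrivial.mp (by omega)
    fun u => hG.preconnected.degree_pos_of_nontrivial u
  have hXpos : 0 < ∏ u ∈ s, G.degree u := prod_pos fun u _ => hpos u
  have hYpos : 0 < PY := (prod_pos fun u _ => hpos u).trans_le hY
  have hPY : ∏ u ∈ sᶜ, G.degree u = PY :=
    ((mul_eq_mul_iff_eq_and_eq_of_pos hX hY hXpos hYpos).mp (by rw [← hsplit]; omega)).2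
  obtain ⟨x, rfl⟩ : ∃ x, s = {x} := card_eq_one.mp (by omega)
  refine ⟨x, ?_, ?_⟩
  · rw [degree_eq_card_filter_adj_add {x} x, ← hmk, ← hsum, sum_singleton]
    simp
  · have := isClique_of_prod_degree_eq (fun u _ => hpos u) (by rwa [hB, Nat.add_sub_cancel])
    rwa [coe_compl, coe_singleton] at this

end

end SimpleGraph

namespace KnK

variable {n k : ℕ} [NeZero n]

lemma adj_zero_iff {v : Fin n} : (KnK n k).Adj 0 v ↔ 1 ≤ (v : ℕ) ∧ (v : ℕ) ≤ k := by
  simp only [KnK, fromRel_adj, ne_eq, Fin.ext_iff, Fin.val_zero, not_true_eq_false, true_and,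
    false_and, and_false, false_or]
  omega

lemma isClique_compl_zero : (KnK n k).IsClique ({0}ᶜ : Set (Fin n)) := by
  intro u hu v hv huv
  simp only [Set.mem_compl_iff, Set.mem_singleton_iff, Fin.ext_iff, Fin.val_zero] at hu hv
  exact (fromRel_adj _ _ _).mpr ⟨huv, Or.inl (Or.inl ⟨hu, hv⟩)⟩

lemma degree_zero [DecidableRel (KnK n k).Adj] (hk : k ≤ n - 1) : (KnK n k).degree 0 = k := by
  have hkn : ∀ m ∈ Icc 1 k, m < n := fun m hm => by
    have := (mem_Icc.mp hm).2; have := NeZero.pos n; omega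
  have : (KnK n k).neighborFinset 0 = (Icc 1 k).attachFin hkn := by
    ext v
    simp [adj_zero_iff]
  rw [← card_neighborFinset_eq_degree, this, card_attachFin, Nat.card_Icc, Nat.add_sub_cancel]

end KnK

lemma mdeg_eq_degree_s2 {V : Type*} (G : SimpleGraph V) (v : V) [Fintype (G.neighborSet v)] :
    mdeg G v = G.degree v := by
  rw [mdeg, Nat.card_eq_fintype_card, card_neighborSet_eq_degree]

lemma mZ1_eq_sq_prod_degree {V : Type*} [Fintype V] (G : SimpleGraph V) [DecidableRel G.Adj] :
    mZ1 G = (∏ v, G.degree v) ^ 2 := by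
  simp only [mZ1, mdeg_eq_degree_s2, prod_pow]

lemma SimpleGraph.Iso.prod_degree_eq {V W : Type*} [Fintype V] [Fintype W] {G : SimpleGraph V}
    {H : SimpleGraph W} [DecidableRel G.Adj] [DecidableRel H.Adj] (e : G ≃g H) :
    ∏ v, G.degree v = ∏ w, H.degree w :=
  Fintype.prod_equiv e.toEquiv _ _ fun v => (e.degree_eq v).symm

theorem stmt2_general (n k : ℕ) (hn : 3 ≤ n) (hk2 : k ≤ n - 1)
    (G : SimpleGraph (Fin n)) (hG : G.Connected) (hκ' : EdgeConnAtMost G k) :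
    mZ1 G ≤ k ^ 2 * (n - 1) ^ (2 * k) * (n - 2) ^ (2 * (n - k - 1)) ∧
      (mZ1 G = k ^ 2 * (n - 1) ^ (2 * k) * (n - 2) ^ (2 * (n - k - 1)) ↔
        Nonempty (G ≃g KnK n k)) := by
  classical
  have : NeZero n := ⟨by omega⟩
  obtain ⟨s, hs, hs', hss', hcut⟩ := exists_small_cut hG hκ'
  obtain ⟨hle, hextremal⟩ := prod_degree_le_coneDegreeProd hG (by simpa) (by simpa) hs hs' hss' hcut
  rw [Fintype.card_fin] at hle hextremal
  have hbound :
      k ^ 2 * (n - 1) ^ (2 * k) * (n - 2) ^ (2 * (n - k - 1)) = coneDegreeProd n k ^ 2 := by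
    rw [coneDegreeProd, Nat.sub_right_comm n k 1]; ring
  rw [mZ1_eq_sq_prod_degree, hbound, (Nat.pow_left_injective two_ne_zero).eq_iff]
  refine ⟨Nat.pow_le_pow_left hle 2, fun h => ?_, fun ⟨e⟩ => ?_⟩
  · obtain ⟨x, hx, hclique⟩ := hextremal h
    exact nonempty_iso_of_isClique_compl_singleton hclique KnK.isClique_compl_zero rfl
      (hx.trans (KnK.degree_zero hk2).symm)
  · rw [e.prod_degree_eq, prod_degree_of_isClique_compl_singleton KnK.isClique_compl_zero,
      KnK.degree_zero hk2, Fintype.card_fin]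

theorem stmt2 (n k : ℕ) (hn : 3 ≤ n) (hk1 : 1 ≤ k) (hk2 : k ≤ n - 1)
    (G : SimpleGraph (Fin n)) (hG : G.Connected) (hκ' : EdgeConnAtMost G k) :
    mZ1 G ≤ k ^ 2 * (n - 1) ^ (2 * k) * (n - 2) ^ (2 * (n - k - 1)) ∧
      (mZ1 G = k ^ 2 * (n - 1) ^ (2 * k) * (n - 2) ^ (2 * (n - k - 1)) ↔
        Nonempty (G ≃g KnK n k)) :=
  stmt2_general n k hn hk2 G hG hκ'
end
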